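/- arXiv:cs/0503031 — 5 statements merged into one kernel-verified Lean document; each statement's English description precedes it below -/
import Mathlib

section
/- Fix τ₀ ∈ ℝ, A_max > 0, constants 0 < α_low ≤ α_up < ∞, σ̄² > 0 and B < ∞. Let T_i (i ∈ ℕ) be independent random variables with T_i ~ N(0, σ̄²/α_i²), where α_i ∈ [α_low, α_up] and σ̄²/α_i² < B for all i. Let K_i be i.i.d. random variables with values in [0,1], 0 < E(K₁) ≤ 1 and Var(K₁) ≤ 1, independent of all the T_i. Set A_N(t) = (1/N)·Σ_{i=1}^N A_max·K_i·p(t − τ₀ − T_i), and suppose the sequence (α_i) is such that for every t ∈ ℝ, (1/N)·Σ_{i=1}^N E[A_max·K_i·p(t − τ₀ − T_i)] converges as N → ∞ to η(t) = A_max·E(K₁)·∫_{α_low}^{α_up} ∫_ℝ p(t − τ₀ − ψ)·f_T(ψ, s) dψ·f_α(s) ds. Then for every t ∈ ℝ, A_N(t) → η(t) almost surely as N → ∞, and the limit function η satisfies: (i) η(τ₀) = 0; (ii) there exists τ with 0 < τ ≤ τ_nz such that η(t) > 0 for t ∈ (τ₀ − τ, τ₀) and η(t) < 0 for t ∈ (τ₀,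 τ₀ + τ); (iii) η is odd around τ₀, i.e. η(τ₀ + ξ) = −η(τ₀ − ξ) for all ξ ≥ 0; (iv) η is continuous on ℝ. -/
open MeasureTheory ProbabilityTheory Filter Set
open scoped NNReal

private lemma nat_sqrt_tendsto : Tendsto Nat.sqrt atTop atTop :=
  Filter.tendsto_atTop_atTop.2 fun b => ⟨b * b, fun n hn => Nat.le_sqrt.2 hn⟩

private lemma aux_ratio_tendsto (C : ℝ) (hC : 0 ≤ C) :
    Tendsto (fun k : ℕ => C * (2 * (k : ℝ) + 1) / (k : ℝ) ^ 2) atTop (nhds 0) := by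
  apply squeeze_zero' (Filter.Eventually.of_forall fun k => by positivity)
    (g := fun k : ℕ => 3 * C / (k : ℝ))
  · filter_upwards [Filter.eventually_ge_atTop 1] with k hk
    have hk' : (1 : ℝ) ≤ (k : ℝ) := by exact_mod_cast hk
    rw [div_le_div_iff₀ (by positivity) (by positivity)]
    nlinarith [mul_nonneg hC (sub_nonneg.2 hk'), mul_nonneg (mul_nonneg hC (sub_nonneg.2 hk')) (le_trans zero_le_one hk')]
  · exact tendsto_const_div_atTop_nhds_zero_nat (3 * C)

private lemma tendsto_div_of_sq_tendsto (S : ℕ → ℝ) (C : ℝ) (hC : 0 ≤ C)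
    (hstep : ∀ n, |S (n + 1) - S n| ≤ C)
    (h : Tendsto (fun k : ℕ => S (k ^ 2) / (k : ℝ) ^ 2) atTop (nhds 0)) :
    Tendsto (fun n : ℕ => S n / (n : ℝ)) atTop (nhds 0) := by
  have hgap : ∀ n m : ℕ, n ≤ m → |S m - S n| ≤ C * ((m : ℝ) - (n : ℝ)) := by
    intro n m hnm
    induction m, hnm using Nat.le_induction with
    | base => simp
    | succ m hm ih =>
      have h1 := hstep m
      have h2 : |S (m + 1) - S n| ≤ |S (m + 1) - S m| + |S m - S n| := by
        have := abs_add_le (S (m + 1) - S m) (S m - S n)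
        simpa using this
      push_cast
      push_cast at ih
      linarith
  have hgt : Tendsto (fun n : ℕ => |S ((Nat.sqrt n) ^ 2) / ((Nat.sqrt n : ℕ) : ℝ) ^ 2|
      + C * (2 * ((Nat.sqrt n : ℕ) : ℝ) + 1) / ((Nat.sqrt n : ℕ) : ℝ) ^ 2) atTop (nhds 0) := by
    have h1 : Tendsto (fun k : ℕ => |S (k ^ 2) / (k : ℝ) ^ 2|
        + C * (2 * (k : ℝ) + 1) / (k : ℝ) ^ 2) atTop (nhds 0) := by
      have h2 : Tendsto (fun k : ℕ => |S (k ^ 2) / (k : ℝ) ^ 2|) atTop (nhds 0) := by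
        simpa using h.abs
      simpa using h2.add (aux_ratio_tendsto C hC)
    exact h1.comp nat_sqrt_tendsto
  apply squeeze_zero_norm' _ hgt
  filter_upwards [Filter.eventually_ge_atTop 1] with n hn
  set k := Nat.sqrt n with hk
  have hk1 : 1 ≤ k := Nat.le_sqrt.2 (by simpa using hn)
  have hkR : (1 : ℝ) ≤ (k : ℝ) := by exact_mod_cast hk1
  have hkpos : (0 : ℝ) < (k : ℝ) ^ 2 := by positivity
  have hkn : (k : ℝ) ^ 2 ≤ (n : ℝ) := by exact_mod_cast Nat.sqrt_le' n
  have hnk : (n : ℝ) < ((k : ℝ) + 1) ^ 2 := by exact_mod_cast Nat.lt_succ_sqrt' n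
  have hnpos : (0 : ℝ) < (n : ℝ) := lt_of_lt_of_le hkpos hkn
  have hgapn : |S n - S (k ^ 2)| ≤ C * (2 * (k : ℝ) + 1) := by
    have h1 := hgap (k ^ 2) n (Nat.sqrt_le' n)
    have h2 : (n : ℝ) - ((k ^ 2 : ℕ) : ℝ) ≤ 2 * (k : ℝ) + 1 := by push_cast; nlinarith
    calc |S n - S (k ^ 2)| ≤ C * ((n : ℝ) - ((k ^ 2 : ℕ) : ℝ)) := h1
    _ ≤ C * (2 * (k : ℝ) + 1) := mul_le_mul_of_nonneg_left h2 hC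
  have hSn : |S n| ≤ |S (k ^ 2)| + C * (2 * (k : ℝ) + 1) := by
    calc |S n| = |S (k ^ 2) + (S n - S (k ^ 2))| := by ring_nf
    _ ≤ |S (k ^ 2)| + |S n - S (k ^ 2)| := abs_add_le _ _
    _ ≤ _ := by linarith
  show ‖S n / (n : ℝ)‖ ≤ _
  rw [Real.norm_eq_abs, abs_div, abs_of_pos hnpos]
  calc |S n| / (n : ℝ) ≤ (|S (k ^ 2)| + C * (2 * (k : ℝ) + 1)) / (k : ℝ) ^ 2 :=
    div_le_div₀ (by positivity) hSn hkpos hkn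
  _ = |S (k ^ 2)| / (k : ℝ) ^ 2 + C * (2 * (k : ℝ) + 1) / (k : ℝ) ^ 2 := by ring
  _ = _ := by rw [abs_div, abs_of_pos hkpos]

private lemma slln_of_bounded' {Ω : Type*} [MeasurableSpace Ω] (P : Measure Ω)
    [IsProbabilityMeasure P] (X : ℕ → Ω → ℝ) (M : ℝ) (hM : 0 ≤ M)
    (hmeas : ∀ i, Measurable (X i))
    (hbdd : ∀ i ω, |X i ω| ≤ M)
    (hindep : Pairwise fun i j => IndepFun (X i) (X j) P) :
    ∀ᵐ ω ∂P, Tendsto (fun N : ℕ => (1 / (N : ℝ)) *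
      ∑ i ∈ Finset.range N, (X i ω - ∫ ω', X i ω' ∂P)) atTop (nhds 0) := by
  set Y : ℕ → Ω → ℝ := fun i ω => X i ω - ∫ ω', X i ω' ∂P with hY
  have hX2 : ∀ i, MemLp (X i) 2 P := fun i =>
    MemLp.of_bound (hmeas i).aestronglyMeasurable M
      (Filter.Eventually.of_forall fun ω => by rw [Real.norm_eq_abs]; exact hbdd i ω)
  have hXint : ∀ i, Integrable (X i) P := fun i => (hX2 i).integrable one_le_two
  have hEX : ∀ i, |∫ ω', X i ω' ∂P| ≤ M := by
    intro i
    calc |∫ ω', X i ω' ∂P| = ‖∫ ω', X i ω' ∂P‖ := rfl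
    _ ≤ ∫ _ω', M ∂P := norm_integral_le_of_norm_le (integrable_const M)
        (Filter.Eventually.of_forall fun ω => by rw [Real.norm_eq_abs]; exact hbdd i ω)
    _ = M := by simp
  have hYbdd : ∀ i ω, |Y i ω| ≤ 2 * M := by
    intro i ω
    have h1 := hbdd i ω
    have h2 := hEX i
    have h0 : |X i ω - ∫ ω', X i ω' ∂P| ≤ |X i ω| + |∫ ω', X i ω' ∂P| := by
      calc |X i ω - ∫ ω', X i ω' ∂P| = |X i ω + -(∫ ω', X i ω' ∂P)| := by ring_nf
      _ ≤ |X i ω| + |-(∫ ω', X i ω' ∂P)| := abs_add_le _ _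
      _ = |X i ω| + |∫ ω', X i ω' ∂P| := by rw [abs_neg]
    simp only [hY]
    linarith
  have hY2 : ∀ i, MemLp (Y i) 2 P := fun i => (hX2 i).sub (memLp_const _)
  have hYmeas : ∀ i, Measurable (Y i) := fun i => (hmeas i).sub measurable_const
  have hYint : ∀ i, Integrable (Y i) P := fun i => (hXint i).sub (integrable_const _)
  have hYmean : ∀ i, ∫ ω', Y i ω' ∂P = 0 := fun i => by
    simp [hY, integral_sub (hXint i) (integrable_const _)]
  have hYindep : Pairwise fun i j => IndepFun (Y i) (Y j) P := fun i j hij =>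
    (hindep hij).comp (measurable_id.sub_const _) (measurable_id.sub_const _)
  have hYvar : ∀ i, variance (Y i) P ≤ (2 * M) ^ 2 := by
    intro i
    have h1 : ∀ ω', (Y i ω') ^ 2 ≤ (2 * M) ^ 2 := fun ω' =>
      sq_le_sq' (by linarith [(abs_le.1 (hYbdd i ω')).1]) ((abs_le.1 (hYbdd i ω')).2)
    have hb : ∫ ω', (Y i ω') ^ 2 ∂P ≤ (2 * M) ^ 2 := by
      have h2 := integral_mono ((hY2 i).integrable_sq) (integrable_const ((2 * M) ^ 2)) h1
      simpa using h2
    refine (variance_le_expectation_sq (hY2 i).aestronglyMeasurable).trans ?_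
    simpa only [Pi.pow_apply] using hb
  set Sf : ℕ → Ω → ℝ := fun n => ∑ i ∈ Finset.range n, Y i with hSf
  have hSfapp : ∀ n ω, Sf n ω = ∑ i ∈ Finset.range n, Y i ω := by
    intro n ω; rw [hSf]; simp [Finset.sum_apply]
  have hSf2 : ∀ n, MemLp (Sf n) 2 P := fun n => memLp_finset_sum' _ fun i _ => hY2 i
  have hSfmean : ∀ n, ∫ ω', Sf n ω' ∂P = 0 := by
    intro n
    simp only [hSfapp]
    rw [integral_finset_sum _ fun i _ => hYint i]
    simp [hYmean]
  have hSfvar : ∀ n, variance (Sf n) P ≤ (n : ℝ) * (2 * M) ^ 2 := by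
    intro n
    rw [hSf, IndepFun.variance_sum (fun i _ => hY2 i) (fun i _ j _ hij => hYindep hij)]
    calc ∑ i ∈ Finset.range n, variance (Y i) P ≤ ∑ _i ∈ Finset.range n, (2 * M) ^ 2 :=
      Finset.sum_le_sum fun i _ => hYvar i
    _ = (n : ℝ) * (2 * M) ^ 2 := by simp [mul_comm]
  have hBC : ∀ j : ℕ, ∀ᵐ ω ∂P, ∀ᶠ k : ℕ in atTop,
      ω ∉ {ω' | (k : ℝ) ^ 2 * (1 / ((j : ℝ) + 1)) ≤ |Sf (k ^ 2) ω'|} := by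
    intro j
    set ε : ℝ := 1 / ((j : ℝ) + 1) with hε
    have hεpos : 0 < ε := by positivity
    apply ae_eventually_notMem
    have hPk : ∀ k : ℕ, 1 ≤ k → P {ω' | (k : ℝ) ^ 2 * ε ≤ |Sf (k ^ 2) ω'|}
        ≤ ENNReal.ofReal ((2 * M) ^ 2 / ε ^ 2 * (1 / (k : ℝ) ^ 2)) := by
      intro k hk
      have hkR : (1 : ℝ) ≤ (k : ℝ) := by exact_mod_cast hk
      have hkpos : (0 : ℝ) < (k : ℝ) ^ 2 := by positivity
      have hc : 0 < (k : ℝ) ^ 2 * ε := by positivity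
      have hcheb := meas_ge_le_variance_div_sq (μ := P) (hSf2 (k ^ 2)) hc
      rw [hSfmean (k ^ 2)] at hcheb
      simp only [sub_zero] at hcheb
      refine hcheb.trans ?_
      apply ENNReal.ofReal_le_ofReal
      have hvar := hSfvar (k ^ 2)
      have hcast : ((k ^ 2 : ℕ) : ℝ) = (k : ℝ) ^ 2 := by push_cast; ring
      rw [hcast] at hvar
      have h1 : variance (Sf (k ^ 2)) P / ((k : ℝ) ^ 2 * ε) ^ 2
          ≤ ((k : ℝ) ^ 2 * (2 * M) ^ 2) / ((k : ℝ) ^ 2 * ε) ^ 2 := by gcongr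
      refine h1.trans (le_of_eq ?_)
      field_simp
    have hsum0 : Summable (fun k : ℕ => (2 * M) ^ 2 / ε ^ 2 * (1 / (k : ℝ) ^ 2)) :=
      (Real.summable_one_div_nat_pow.2 one_lt_two).mul_left _
    have hbound : ∀ k : ℕ, P {ω' | (k : ℝ) ^ 2 * ε ≤ |Sf (k ^ 2) ω'|}
        ≤ (if k = 0 then 1 else 0) + ENNReal.ofReal ((2 * M) ^ 2 / ε ^ 2 * (1 / (k : ℝ) ^ 2)) := by
      intro k
      rcases Nat.eq_zero_or_pos k with rfl | hk
      · simpa using (prob_le_one : P _ ≤ 1).trans le_self_add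
      · have h4 := hPk k hk
        have h5 : (if k = 0 then (1 : ENNReal) else 0) = 0 := by
          simp [Nat.pos_iff_ne_zero.1 hk]
        rw [h5, zero_add]
        exact h4
    refine ne_top_of_le_ne_top ?_ (ENNReal.tsum_le_tsum hbound)
    rw [ENNReal.tsum_add]
    apply ENNReal.add_ne_top.2
    constructor
    · rw [tsum_ite_eq]
      exact ENNReal.one_ne_top
    · rw [← ENNReal.ofReal_tsum_of_nonneg (fun k => by positivity) hsum0]
      exact ENNReal.ofReal_ne_top
  have hae := ae_all_iff.2 hBC
  filter_upwards [hae] with ω hω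
  have hsq : Tendsto (fun k : ℕ => Sf (k ^ 2) ω / (k : ℝ) ^ 2) atTop (nhds 0) := by
    rw [Metric.tendsto_atTop]
    intro δ hδ
    obtain ⟨j, hj⟩ := exists_nat_one_div_lt hδ
    obtain ⟨N, hN⟩ := Filter.eventually_atTop.1 (hω j)
    refine ⟨max N 1, fun k hk => ?_⟩
    have hk1 : 1 ≤ k := le_trans (le_max_right N 1) hk
    have hkN : N ≤ k := le_trans (le_max_left N 1) hk
    have hnot := hN k hkN
    simp only [Set.mem_setOf_eq, not_le] at hnot
    have hkR : (1 : ℝ) ≤ (k : ℝ) := by exact_mod_cast hk1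
    have hkpos : (0 : ℝ) < (k : ℝ) ^ 2 := by positivity
    rw [Real.dist_eq, sub_zero, abs_div, abs_of_pos hkpos, div_lt_iff₀ hkpos]
    calc |Sf (k ^ 2) ω| < (k : ℝ) ^ 2 * (1 / ((j : ℝ) + 1)) := hnot
    _ ≤ δ * (k : ℝ) ^ 2 := by
        rw [mul_comm]
        exact mul_le_mul_of_nonneg_right hj.le (by positivity)
  have hstep : ∀ n, |Sf (n + 1) ω - Sf n ω| ≤ 2 * M := by
    intro n
    rw [hSfapp, hSfapp, Finset.sum_range_succ, add_sub_cancel_left]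
    exact hYbdd n ω
  have hfin := tendsto_div_of_sq_tendsto (fun n => Sf n ω) (2 * M) (by positivity) hstep hsq
  have heq : (fun N : ℕ => (1 / (N : ℝ)) *
      ∑ i ∈ Finset.range N, (X i ω - ∫ ω', X i ω' ∂P)) = fun N : ℕ => Sf N ω / (N : ℝ) := by
    funext N
    rw [hSfapp, one_div, inv_mul_eq_div]
  rw [heq]
  exact hfin

private noncomputable def Gd (σb s ψ : ℝ) : ℝ :=
  s * (Real.sqrt (2 * Real.pi * σb))⁻¹ * Real.exp (-(ψ ^ 2 * s ^ 2) * (2 * σb)⁻¹)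

private lemma Gd_cont (σb : ℝ) : Continuous fun z : ℝ × ℝ => Gd σb z.1 z.2 := by
  unfold Gd
  fun_prop

private lemma Gd_eq {σb : ℝ} (hσ : 0 < σb) {s : ℝ} (hs : 0 < s) (ψ : ℝ) :
    gaussianPDFReal 0 (σb / s ^ 2).toNNReal ψ = Gd σb s ψ := by
  have hπ := Real.pi_pos
  have hv : (0:ℝ) ≤ σb / s ^ 2 := by positivity
  have hsqrtpos : 0 < Real.sqrt (2 * Real.pi * σb) := Real.sqrt_pos.2 (by positivity)
  have hsq : Real.sqrt (2 * Real.pi * (σb / s ^ 2)) = Real.sqrt (2 * Real.pi * σb) / s := by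
    rw [show 2 * Real.pi * (σb / s ^ 2) = (2 * Real.pi * σb) / s ^ 2 by ring,
      Real.sqrt_div (by positivity) _, Real.sqrt_sq hs.le]
  have harg : -ψ ^ 2 / (2 * (σb / s ^ 2)) = -(ψ ^ 2 * s ^ 2) * (2 * σb)⁻¹ := by
    field_simp
  unfold gaussianPDFReal Gd
  rw [Real.coe_toNNReal _ hv, sub_zero, hsq, harg, inv_div, div_eq_mul_inv]

private lemma Gd_nonneg {σb : ℝ} {s : ℝ} (hs : 0 ≤ s) (ψ : ℝ) : 0 ≤ Gd σb s ψ := by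
  unfold Gd
  have := (Real.exp_pos (-(ψ ^ 2 * s ^ 2) * (2 * σb)⁻¹)).le
  have h2 : (0:ℝ) ≤ (Real.sqrt (2 * Real.pi * σb))⁻¹ := by positivity
  positivity

private lemma Gd_le {σb : ℝ} (hσ : 0 < σb) {s : ℝ} (hs : 0 ≤ s) (ψ : ℝ) :
    Gd σb s ψ ≤ s * (Real.sqrt (2 * Real.pi * σb))⁻¹ := by
  have hπ := Real.pi_pos
  unfold Gd
  have h1 : Real.exp (-(ψ ^ 2 * s ^ 2) * (2 * σb)⁻¹) ≤ 1 := by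
    rw [Real.exp_le_one_iff]
    have : (0:ℝ) ≤ ψ ^ 2 * s ^ 2 * (2 * σb)⁻¹ := by positivity
    linarith
  have h2 : (0:ℝ) ≤ s * (Real.sqrt (2 * Real.pi * σb))⁻¹ := by positivity
  calc s * (Real.sqrt (2 * Real.pi * σb))⁻¹ * Real.exp (-(ψ ^ 2 * s ^ 2) * (2 * σb)⁻¹)
      ≤ s * (Real.sqrt (2 * Real.pi * σb))⁻¹ * 1 := mul_le_mul_of_nonneg_left h1 h2
  _ = s * (Real.sqrt (2 * Real.pi * σb))⁻¹ := mul_one _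

private lemma Gd_int {σb : ℝ} (hσ : 0 < σb) {s : ℝ} (hs : 0 < s) :
    Integrable (Gd σb s) := by
  have hb : 0 < s ^ 2 * (2 * σb)⁻¹ := by positivity
  have h2 : Gd σb s = fun ψ => (s * (Real.sqrt (2 * Real.pi * σb))⁻¹) *
      Real.exp (-(s ^ 2 * (2 * σb)⁻¹) * ψ ^ 2) := by
    funext ψ
    unfold Gd
    congr 1
    ring
  rw [h2]
  exact (integrable_exp_neg_mul_sq hb).const_mul _

private lemma Gd_one {σb : ℝ} (hσ : 0 < σb) {s : ℝ} (hs : 0 < s) :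
    ∫ ψ, Gd σb s ψ = 1 := by
  have hv : (σb / s ^ 2).toNNReal ≠ 0 := by
    simp only [ne_eq, Real.toNNReal_eq_zero, not_le]
    positivity
  rw [← integral_gaussianPDFReal_eq_one 0 hv]
  congr 1
  funext ψ
  exact (Gd_eq hσ hs ψ).symm


private lemma Gd_abs_le {σb : ℝ} (hσ : 0 < σb) (s ψ : ℝ) :
    |Gd σb s ψ| ≤ |s| * (Real.sqrt (2 * Real.pi * σb))⁻¹ := by
  have hπ := Real.pi_pos
  have hsqrtpos : 0 < Real.sqrt (2 * Real.pi * σb) := Real.sqrt_pos.2 (by positivity)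
  unfold Gd
  rw [abs_mul, abs_mul]
  have h1 : |Real.exp (-(ψ ^ 2 * s ^ 2) * (2 * σb)⁻¹)| ≤ 1 := by
    rw [abs_of_pos (Real.exp_pos _), Real.exp_le_one_iff]
    have : (0:ℝ) ≤ ψ ^ 2 * s ^ 2 * (2 * σb)⁻¹ := by positivity
    linarith
  calc |s| * |(Real.sqrt (2 * Real.pi * σb))⁻¹| * |Real.exp (-(ψ ^ 2 * s ^ 2) * (2 * σb)⁻¹)|
      ≤ |s| * |(Real.sqrt (2 * Real.pi * σb))⁻¹| * 1 :=
        mul_le_mul_of_nonneg_left h1 (by positivity)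
  _ = |s| * (Real.sqrt (2 * Real.pi * σb))⁻¹ := by
        rw [abs_of_pos (inv_pos.2 hsqrtpos)]; ring

/-- **Theorem 1 of the paper.** The aggregate waveform
`A_N(t) = (1/N) ∑ A_max K_i p(t - τ₀ - T_i)` with independent Gaussian timing
errors `T_i ~ N(0, σ̄²/α_i²)` and i.i.d. pathloss coefficients `K_i ∈ [0,1]`
converges almost surely, for each `t`, to the deterministic limit `η(t)`;
moreover `η(τ₀) = 0`, `η` is positive just left and negative just right of `τ₀`,
`η` is odd around `τ₀`, and `η` is continuous. -/
theorem aggregate_waveform_limit_properties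
    (τnz : ℝ) (hτnz : 0 < τnz) (q p : ℝ → ℝ)
    (hq_pos : ∀ t ∈ Set.Ioo (-τnz) 0, 0 < q t)
    (hq_zero : ∀ t, t ∉ Set.Ioo (-τnz) 0 → q t = 0)
    (hq_sup : (⨆ t, |q t|) = 1)
    (hq_uc : UniformContinuousOn q (Set.Ioo (-τnz) 0))
    (hp_neg : ∀ t ∈ Set.Ioo (-τnz) 0, p t = q t)
    (hp_pos : ∀ t ∈ Set.Ioo 0 τnz, p t = -q (-t))
    (hp_zero : p 0 = 0)
    (hp_out : ∀ t, t ≤ -τnz ∨ τnz ≤ t → p t = 0)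
    (hp_meas : Measurable p)
    {Ω : Type*} [MeasurableSpace Ω] (P : Measure Ω) [IsProbabilityMeasure P]
    (τ₀ Amax : ℝ) (hA : 0 < Amax)
    (αlow αup : ℝ) (hαlow : 0 < αlow) (hαord : αlow ≤ αup)
    (σbarsq : ℝ) (hσ : 0 < σbarsq) (B : ℝ)
    (α : ℕ → ℝ) (hα : ∀ i, α i ∈ Set.Icc αlow αup)
    (hαB : ∀ i, σbarsq / (α i) ^ 2 < B)
    (T K : ℕ → Ω → ℝ)
    (hT_meas : ∀ i, Measurable (T i)) (hK_meas : ∀ i, Measurable (K i))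
    (hT_law : ∀ i, Measure.map (T i) P = gaussianReal 0 (σbarsq / (α i) ^ 2).toNNReal)
    (hK_range : ∀ i ω, K i ω ∈ Set.Icc (0 : ℝ) 1)
    (hK_ident : ∀ i, Measure.map (K i) P = Measure.map (K 0) P)
    (hK_mean_pos : 0 < ∫ ω, K 0 ω ∂P) (hK_mean_le : ∫ ω, K 0 ω ∂P ≤ 1)
    (hK_var : variance (K 0) P ≤ 1)
    (hindep : iIndepFun (Sum.elim T K) P)
    (fα : ℝ → ℝ) (Gα : ℝ)
    (hfα_nonneg : ∀ s, 0 ≤ fα s)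
    (hfα_supp : ∀ s, s ∉ Set.Icc αlow αup → fα s = 0)
    (hfα_int : ∫ s in αlow..αup, fα s = 1)
    (hfα_bdd : ∀ s, |fα s| ≤ Gα)
    (η : ℝ → ℝ)
    (hη : ∀ t, η t = Amax * (∫ ω, K 0 ω ∂P) *
      ∫ s in αlow..αup,
        (∫ ψ, p (t - τ₀ - ψ) * gaussianPDFReal 0 (σbarsq / s ^ 2).toNNReal ψ) * fα s)
    (hmean : ∀ t : ℝ, Tendsto
      (fun N : ℕ => (1 / (N : ℝ)) *
        ∑ i ∈ Finset.range N, ∫ ω, Amax * K i ω * p (t - τ₀ - T i ω) ∂P)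
      atTop (nhds (η t))) :
    (∀ t : ℝ, ∀ᵐ ω ∂P, Tendsto
      (fun N : ℕ => (1 / (N : ℝ)) *
        ∑ i ∈ Finset.range N, Amax * K i ω * p (t - τ₀ - T i ω))
      atTop (nhds (η t))) ∧
    η τ₀ = 0 ∧
    (∃ τ : ℝ, 0 < τ ∧ τ ≤ τnz ∧
      (∀ t ∈ Set.Ioo (τ₀ - τ) τ₀, 0 < η t) ∧
      (∀ t ∈ Set.Ioo τ₀ (τ₀ + τ), η t < 0)) ∧
    (∀ ξ : ℝ, 0 ≤ ξ → η (τ₀ + ξ) = -η (τ₀ - ξ)) ∧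
    Continuous η := by
  have hπ := Real.pi_pos
  -- |q| ≤ 1 and |p| ≤ 1
  have hq_abs : ∀ x, |q x| ≤ 1 := by
    intro x
    by_cases hb : BddAbove (Set.range fun t => |q t|)
    · calc |q x| ≤ ⨆ t, |q t| := le_ciSup hb x
      _ = 1 := hq_sup
    · rw [Real.iSup_of_not_bddAbove hb] at hq_sup; norm_num at hq_sup
  have hp_abs : ∀ x, |p x| ≤ 1 := by
    intro x
    rcases le_or_gt x (-τnz) with h1 | h1
    · rw [hp_out x (Or.inl h1)]; norm_num
    rcases le_or_gt τnz x with h2 | h2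
    · rw [hp_out x (Or.inr h2)]; norm_num
    rcases lt_trichotomy x 0 with h3 | h3 | h3
    · rw [hp_neg x ⟨h1, h3⟩]; exact hq_abs x
    · rw [h3, hp_zero]; norm_num
    · rw [hp_pos x ⟨h3, h2⟩, abs_neg]; exact hq_abs (-x)
  have hp_odd : ∀ x, p (-x) = -p x := by
    intro x
    rcases le_or_gt x (-τnz) with h1 | h1
    · rw [hp_out x (Or.inl h1), hp_out (-x) (Or.inr (by linarith)), neg_zero]
    rcases le_or_gt τnz x with h2 | h2
    · rw [hp_out x (Or.inr h2), hp_out (-x) (Or.inl (by linarith)), neg_zero]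
    rcases lt_trichotomy x 0 with h3 | h3 | h3
    · rw [hp_neg x ⟨h1, h3⟩, hp_pos (-x) ⟨by linarith, by linarith⟩, neg_neg]
    · rw [h3]; simp [hp_zero]
    · rw [hp_pos x ⟨h3, h2⟩, hp_neg (-x) ⟨by linarith, by linarith⟩]; simp
  -- gaussian pdf is even
  have hgauss_even : ∀ (v : ℝ≥0) (ψ : ℝ), gaussianPDFReal 0 v (-ψ) = gaussianPDFReal 0 v ψ := by
    intro v ψ
    simp [gaussianPDFReal, neg_sq]
  -- oddness of the inner integral
  have hJ_odd : ∀ (ξ : ℝ) (s : ℝ),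
      (∫ ψ, p (τ₀ - ξ - τ₀ - ψ) * gaussianPDFReal 0 (σbarsq / s ^ 2).toNNReal ψ)
      = -∫ ψ, p (τ₀ + ξ - τ₀ - ψ) * gaussianPDFReal 0 (σbarsq / s ^ 2).toNNReal ψ := by
    intro ξ s
    have h1 := integral_neg_eq_self (μ := volume)
      (fun ψ => p (τ₀ - ξ - τ₀ - ψ) * gaussianPDFReal 0 (σbarsq / s ^ 2).toNNReal ψ)
    rw [← h1, ← integral_neg]
    congr 1
    funext x
    rw [hgauss_even]
    have h2 : τ₀ - ξ - τ₀ - (-x) = -(τ₀ + ξ - τ₀ - x) := by ring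
    rw [h2, hp_odd]
    ring
  have hodd : ∀ ξ : ℝ, η (τ₀ - ξ) = -η (τ₀ + ξ) := by
    intro ξ
    rw [hη, hη]
    have h3 : (∫ s in αlow..αup,
        (∫ ψ, p (τ₀ - ξ - τ₀ - ψ) * gaussianPDFReal 0 (σbarsq / s ^ 2).toNNReal ψ) * fα s)
        = ∫ s in αlow..αup,
          -((∫ ψ, p (τ₀ + ξ - τ₀ - ψ) * gaussianPDFReal 0 (σbarsq / s ^ 2).toNNReal ψ) * fα s) := by
      apply intervalIntegral.integral_congr
      intro s _
      dsimp only
      rw [hJ_odd]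
      ring
    rw [h3, intervalIntegral.integral_neg]
    ring
  have hη0 : η τ₀ = 0 := by
    have h1 := hodd 0
    simp only [sub_zero, add_zero] at h1
    linarith
  have hsqrtpos : 0 < Real.sqrt (2 * Real.pi * σbarsq) := Real.sqrt_pos.2 (by positivity)
  -- substitution lemmas
  have hsubst : ∀ (f : ℝ → ℝ) (dd : ℝ), ∫ x, f (dd - x) = ∫ x, f x := by
    intro f dd
    have h1 : ∫ x, f (dd + x) = ∫ x, f x := integral_add_left_eq_self f dd
    have h2 := integral_neg_eq_self (μ := volume) (fun x => f (dd + x))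
    rw [← h1, ← h2]
    simp only [sub_eq_add_neg]
  have hswap : ∀ t s : ℝ, (∫ ψ, p (t - τ₀ - ψ) * Gd σbarsq s ψ)
      = ∫ ψ, p ψ * Gd σbarsq s (t - τ₀ - ψ) := by
    intro t s
    have h1 := hsubst (fun u => p u * Gd σbarsq s (t - τ₀ - u)) (t - τ₀)
    rw [← h1]
    congr 1
    funext x
    rw [sub_sub_cancel]
  -- p is integrable
  have hp_int : Integrable p := by
    have h1 : IntegrableOn p (Set.Ioo (-τnz) τnz) := by
      apply Integrable.mono' (g := fun _ => (1:ℝ))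
        (integrableOn_const measure_Ioo_lt_top.ne)
        hp_meas.aestronglyMeasurable.restrict
      exact Filter.Eventually.of_forall fun x => by rw [Real.norm_eq_abs]; exact hp_abs x
    have h2 : p = Set.indicator (Set.Ioo (-τnz) τnz) p := by
      funext x
      by_cases hx : x ∈ Set.Ioo (-τnz) τnz
      · rw [Set.indicator_of_mem hx]
      · rw [Set.indicator_of_notMem hx]
        simp only [Set.mem_Ioo, not_and_or, not_lt] at hx
        rcases hx with h | h
        · exact hp_out x (Or.inl (by linarith))
        · exact hp_out x (Or.inr h)
    rw [h2, integrable_indicator_iff measurableSet_Ioo]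
    exact h1
  -- bound on the convolution
  have hinner_abs : ∀ t s : ℝ, 0 < s → |∫ ψ, p (t - τ₀ - ψ) * Gd σbarsq s ψ| ≤ 1 := by
    intro t s hs
    have h1 : ‖∫ ψ, p (t - τ₀ - ψ) * Gd σbarsq s ψ‖ ≤ ∫ ψ, Gd σbarsq s ψ := by
      apply norm_integral_le_of_norm_le (Gd_int hσ hs)
      apply Filter.Eventually.of_forall
      intro ψ
      rw [Real.norm_eq_abs, abs_mul]
      calc |p (t - τ₀ - ψ)| * |Gd σbarsq s ψ| ≤ 1 * |Gd σbarsq s ψ| :=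
        mul_le_mul_of_nonneg_right (hp_abs _) (abs_nonneg _)
      _ = |Gd σbarsq s ψ| := one_mul _
      _ = Gd σbarsq s ψ := abs_of_nonneg (Gd_nonneg hs.le ψ)
    rw [Gd_one hσ hs] at h1
    exact h1
  -- continuity of the convolution in t
  have hcont_t : ∀ s : ℝ, 0 < s → Continuous fun t => ∫ ψ, p (t - τ₀ - ψ) * Gd σbarsq s ψ := by
    intro s hs
    have hGs_cont : Continuous (Gd σbarsq s) :=
      (Gd_cont σbarsq).comp (continuous_const.prodMk continuous_id)
    have hrw : (fun t => ∫ ψ, p (t - τ₀ - ψ) * Gd σbarsq s ψ)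
        = fun t => ∫ ψ, p ψ * Gd σbarsq s (t - τ₀ - ψ) := funext fun t => hswap t s
    rw [hrw, continuous_iff_continuousAt]
    intro t₀
    apply continuousAt_of_dominated
      (bound := fun ψ => |p ψ| * (s * (Real.sqrt (2 * Real.pi * σbarsq))⁻¹))
    · apply Filter.Eventually.of_forall
      intro t
      exact (hp_meas.mul
        ((hGs_cont.comp (continuous_const.sub continuous_id)).measurable)).aestronglyMeasurable
    · apply Filter.Eventually.of_forall
      intro t
      apply Filter.Eventually.of_forall
      intro ψ
      rw [Real.norm_eq_abs, abs_mul]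
      apply mul_le_mul_of_nonneg_left _ (abs_nonneg _)
      exact (Gd_abs_le hσ s _).trans (le_of_eq (by rw [abs_of_pos hs]))
    · exact hp_int.abs.mul_const _
    · apply Filter.Eventually.of_forall
      intro ψ
      exact (continuousAt_const.mul
        ((hGs_cont.comp ((continuous_id.sub continuous_const).sub continuous_const)).continuousAt))
  -- continuity of the convolution in s
  have hcont_s : ∀ t : ℝ, Continuous fun s => ∫ ψ, p (t - τ₀ - ψ) * Gd σbarsq s ψ := by
    intro t
    rw [continuous_iff_continuousAt]
    intro s₀
    apply continuousAt_of_dominated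
      (bound := Set.indicator (Set.Ioo (t - τ₀ - τnz) (t - τ₀ + τnz))
        (fun _ => (|s₀| + 1) * (Real.sqrt (2 * Real.pi * σbarsq))⁻¹))
    · apply Filter.Eventually.of_forall
      intro s
      exact ((hp_meas.comp (measurable_const.sub measurable_id)).mul
        (((Gd_cont σbarsq).comp
          (continuous_const.prodMk continuous_id)).measurable)).aestronglyMeasurable
    · have hball : ∀ᶠ s in nhds s₀, |s - s₀| < 1 := by
        filter_upwards [Metric.ball_mem_nhds s₀ one_pos] with s hs
        rw [← Real.dist_eq]
        exact hs
      filter_upwards [hball] with s hs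
      apply Filter.Eventually.of_forall
      intro ψ
      by_cases hmem : ψ ∈ Set.Ioo (t - τ₀ - τnz) (t - τ₀ + τnz)
      · rw [Set.indicator_of_mem hmem, Real.norm_eq_abs, abs_mul]
        have hsabs : |s| ≤ |s₀| + 1 := by
          have := abs_sub_abs_le_abs_sub s s₀
          linarith
        have h2 : |Gd σbarsq s ψ| ≤ (|s₀| + 1) * (Real.sqrt (2 * Real.pi * σbarsq))⁻¹ :=
          (Gd_abs_le hσ s ψ).trans (mul_le_mul_of_nonneg_right hsabs (by positivity))
        calc |p (t - τ₀ - ψ)| * |Gd σbarsq s ψ|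
            ≤ 1 * ((|s₀| + 1) * (Real.sqrt (2 * Real.pi * σbarsq))⁻¹) :=
          mul_le_mul (hp_abs _) h2 (abs_nonneg _) zero_le_one
        _ = (|s₀| + 1) * (Real.sqrt (2 * Real.pi * σbarsq))⁻¹ := one_mul _
      · rw [Set.indicator_of_notMem hmem]
        have hzero : p (t - τ₀ - ψ) = 0 := by
          apply hp_out
          simp only [Set.mem_Ioo, not_and_or, not_lt] at hmem
          rcases hmem with h | h
          · right; linarith
          · left; linarith
        rw [Real.norm_eq_abs, hzero, zero_mul, abs_zero]
    · rw [integrable_indicator_iff measurableSet_Ioo]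
      exact integrableOn_const measure_Ioo_lt_top.ne
    · apply Filter.Eventually.of_forall
      intro ψ
      exact continuousAt_const.mul
        (((Gd_cont σbarsq).comp (continuous_id.prodMk continuous_const)).continuousAt)
  -- αlow < αup and integrability of fα
  have hαlt : αlow < αup := by
    rcases lt_or_eq_of_le hαord with h | h
    · exact h
    · exfalso
      rw [← h] at hfα_int
      simp [intervalIntegral.integral_same] at hfα_int
  have hfα_intOn : IntegrableOn fα (Set.Ioc αlow αup) := by
    by_contra hcon
    rw [intervalIntegral.integral_of_le hαord, integral_undef hcon] at hfα_int
    norm_num at hfα_int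
  have hfα_aesm : AEStronglyMeasurable fα (volume.restrict (Set.Ioc αlow αup)) :=
    hfα_intOn.aestronglyMeasurable
  -- rewriting η with Gd
  have hηG : ∀ t, η t = Amax * (∫ ω, K 0 ω ∂P) *
      ∫ s in Set.Ioc αlow αup, (∫ ψ, p (t - τ₀ - ψ) * Gd σbarsq s ψ) * fα s := by
    intro t
    rw [hη t, intervalIntegral.integral_of_le hαord]
    congr 1
    apply setIntegral_congr_fun measurableSet_Ioc
    intro s hs
    have hs0 : 0 < s := lt_trans hαlow hs.1
    dsimp only
    congr 1
    congr 1
    funext ψ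
    rw [Gd_eq hσ hs0 ψ]
  have hIintOn : ∀ t, IntegrableOn (fun s => (∫ ψ, p (t - τ₀ - ψ) * Gd σbarsq s ψ) * fα s)
      (Set.Ioc αlow αup) := by
    intro t
    apply Integrable.mono' hfα_intOn.abs
      (((hcont_s t).aestronglyMeasurable).restrict.mul hfα_aesm)
    rw [ae_restrict_iff' measurableSet_Ioc]
    apply Filter.Eventually.of_forall
    intro s hs
    have hs0 : 0 < s := lt_trans hαlow hs.1
    have hb : ‖(∫ ψ, p (t - τ₀ - ψ) * Gd σbarsq s ψ) * fα s‖ ≤ |fα s| := by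
      rw [Real.norm_eq_abs, abs_mul]
      calc |∫ ψ, p (t - τ₀ - ψ) * Gd σbarsq s ψ| * |fα s| ≤ 1 * |fα s| :=
        mul_le_mul_of_nonneg_right (hinner_abs t s hs0) (abs_nonneg _)
      _ = |fα s| := one_mul _
    exact hb
  -- continuity of η
  have hηcont : Continuous η := by
    have h1 : Continuous fun t => ∫ s in Set.Ioc αlow αup,
        (∫ ψ, p (t - τ₀ - ψ) * Gd σbarsq s ψ) * fα s := by
      rw [continuous_iff_continuousAt]
      intro t₀
      apply continuousAt_of_dominated (bound := fun s => |fα s|)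
      · apply Filter.Eventually.of_forall
        intro t
        exact ((hcont_s t).aestronglyMeasurable).restrict.mul hfα_aesm
      · apply Filter.Eventually.of_forall
        intro t
        rw [ae_restrict_iff' measurableSet_Ioc]
        apply Filter.Eventually.of_forall
        intro s hs
        have hs0 : 0 < s := lt_trans hαlow hs.1
        have hb : ‖(∫ ψ, p (t - τ₀ - ψ) * Gd σbarsq s ψ) * fα s‖ ≤ |fα s| := by
          rw [Real.norm_eq_abs, abs_mul]
          calc |∫ ψ, p (t - τ₀ - ψ) * Gd σbarsq s ψ| * |fα s| ≤ 1 * |fα s| :=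
            mul_le_mul_of_nonneg_right (hinner_abs t s hs0) (abs_nonneg _)
          _ = |fα s| := one_mul _
        exact hb
      · exact hfα_intOn.abs
      · rw [ae_restrict_iff' measurableSet_Ioc]
        apply Filter.Eventually.of_forall
        intro s hs
        have hs0 : 0 < s := lt_trans hαlow hs.1
        exact ((hcont_t s hs0).continuousAt).mul continuousAt_const
    have h2 : η = fun t => Amax * (∫ ω, K 0 ω ∂P) *
        ∫ s in Set.Ioc αlow αup, (∫ ψ, p (t - τ₀ - ψ) * Gd σbarsq s ψ) * fα s := funext hηG
    rw [h2]
    exact continuous_const.mul h1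
  -- positivity of the convolution left of τ₀
  have hq_aesm : AEStronglyMeasurable q (volume.restrict (Set.Ioo (-τnz) 0)) :=
    (hq_uc.continuousOn).aestronglyMeasurable measurableSet_Ioo
  have hIpos : ∀ t ∈ Set.Ioo (τ₀ - τnz) τ₀, ∀ s : ℝ, 0 < s →
      0 < ∫ ψ, p (t - τ₀ - ψ) * Gd σbarsq s ψ := by
    intro t ht s hs
    have hx1 : -τnz < t - τ₀ := by linarith [ht.1]
    have hx2 : t - τ₀ < 0 := by linarith [ht.2]
    have hGs_cont : Continuous (Gd σbarsq s) :=
      (Gd_cont σbarsq).comp (continuous_const.prodMk continuous_id)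
    -- integrability helper on bounded intervals
    have key_int : ∀ (f : ℝ → ℝ) (a b : ℝ),
        AEStronglyMeasurable f (volume.restrict (Set.Ioo a b)) →
        (∀ u, |f u| ≤ s * (Real.sqrt (2 * Real.pi * σbarsq))⁻¹) →
        IntegrableOn f (Set.Ioo a b) := by
      intro f a b hm hb
      apply Integrable.mono' (integrableOn_const (C := s * (Real.sqrt (2 * Real.pi * σbarsq))⁻¹) measure_Ioo_lt_top.ne) hm
      exact Filter.Eventually.of_forall fun u => by rw [Real.norm_eq_abs]; exact hb u
    have habs : ∀ (w z : ℝ), |w| ≤ 1 → |w * Gd σbarsq s z|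
        ≤ s * (Real.sqrt (2 * Real.pi * σbarsq))⁻¹ := by
      intro w z hw
      rw [abs_mul]
      calc |w| * |Gd σbarsq s z| ≤ 1 * (s * (Real.sqrt (2 * Real.pi * σbarsq))⁻¹) := by
            apply mul_le_mul hw _ (abs_nonneg _) zero_le_one
            exact (Gd_abs_le hσ s z).trans (le_of_eq (by rw [abs_of_pos hs]))
      _ = s * (Real.sqrt (2 * Real.pi * σbarsq))⁻¹ := one_mul _
    -- reflection identity
    have hrefl : ∀ (F : ℝ → ℝ) (a b : ℝ),
        (∫ u in Set.Ioo a b, F u) = ∫ u in Set.Ioo (-b) (-a), F (-u) := by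
      intro F a b
      rw [← integral_indicator measurableSet_Ioo, ← integral_indicator measurableSet_Ioo,
        ← integral_neg_eq_self (fun u => Set.indicator (Set.Ioo a b) F u) (μ := volume)]
      congr 1
      funext u
      by_cases hu : u ∈ Set.Ioo (-b) (-a)
      · have hu' := Set.mem_Ioo.1 hu
        have hmu : -u ∈ Set.Ioo a b :=
          Set.mem_Ioo.2 ⟨by linarith [hu'.2], by linarith [hu'.1]⟩
        rw [Set.indicator_of_mem hmu, Set.indicator_of_mem hu]
      · have hmu : -u ∉ Set.Ioo a b := by
          intro hmem
          have hmem' := Set.mem_Ioo.1 hmem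
          exact hu (Set.mem_Ioo.2 ⟨by linarith [hmem'.2], by linarith [hmem'.1]⟩)
        rw [Set.indicator_of_notMem hmu, Set.indicator_of_notMem hu]
    -- split the integral
    have hcompl : ∀ u, u ∉ (Set.Ioo (-τnz) 0 ∪ Set.Ioo 0 τnz) →
        p u * Gd σbarsq s (t - τ₀ - u) = 0 := by
      intro u hu
      have hpu : p u = 0 := by
        rcases le_or_gt u (-τnz) with h1 | h1
        · exact hp_out u (Or.inl h1)
        rcases le_or_gt τnz u with h2 | h2
        · exact hp_out u (Or.inr h2)
        rcases lt_trichotomy u 0 with h3 | h3 | h3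
        · exact absurd (Set.mem_union_left _ (Set.mem_Ioo.2 ⟨h1, h3⟩)) hu
        · rw [h3]; exact hp_zero
        · exact absurd (Set.mem_union_right _ (Set.mem_Ioo.2 ⟨h3, h2⟩)) hu
      rw [hpu, zero_mul]
    have hdisj : Disjoint (Set.Ioo (-τnz) (0:ℝ)) (Set.Ioo 0 τnz) := by
      apply Set.disjoint_left.2
      intro u hu1 hu2
      exact absurd hu2.1 (not_lt.2 hu1.2.le)
    have hmeas1 : AEStronglyMeasurable (fun u => p u * Gd σbarsq s (t - τ₀ - u))
        (volume.restrict (Set.Ioo (-τnz) (0:ℝ))) :=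
      (hp_meas.mul ((hGs_cont.comp (continuous_const.sub continuous_id)).measurable)
        ).aestronglyMeasurable.restrict
    have hmeas2 : AEStronglyMeasurable (fun u => p u * Gd σbarsq s (t - τ₀ - u))
        (volume.restrict (Set.Ioo (0:ℝ) τnz)) :=
      (hp_meas.mul ((hGs_cont.comp (continuous_const.sub continuous_id)).measurable)
        ).aestronglyMeasurable.restrict
    have hi0 : IntegrableOn (fun u => p u * Gd σbarsq s (t - τ₀ - u)) (Set.Ioo (-τnz) (0:ℝ)) :=
      key_int _ _ _ hmeas1 (fun u => habs _ _ (hp_abs u))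
    have hi0' : IntegrableOn (fun u => p u * Gd σbarsq s (t - τ₀ - u)) (Set.Ioo (0:ℝ) τnz) :=
      key_int _ _ _ hmeas2 (fun u => habs _ _ (hp_abs u))
    have hsplit : (∫ u, p u * Gd σbarsq s (t - τ₀ - u))
        = (∫ u in Set.Ioo (-τnz) 0, p u * Gd σbarsq s (t - τ₀ - u))
          + ∫ u in Set.Ioo 0 τnz, p u * Gd σbarsq s (t - τ₀ - u) := by
      rw [← setIntegral_eq_integral_of_forall_compl_eq_zero hcompl,
        setIntegral_union hdisj measurableSet_Ioo hi0 hi0']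
    -- first piece
    have hpiece1 : (∫ u in Set.Ioo (-τnz) 0, p u * Gd σbarsq s (t - τ₀ - u))
        = ∫ u in Set.Ioo (-τnz) 0, q u * Gd σbarsq s (t - τ₀ - u) :=
      setIntegral_congr_fun measurableSet_Ioo fun u hu => by
        rw [hp_neg u hu]
    -- second piece via reflection
    have hpiece2 : (∫ u in Set.Ioo 0 τnz, p u * Gd σbarsq s (t - τ₀ - u))
        = ∫ u in Set.Ioo (-τnz) 0, -(q u * Gd σbarsq s (t - τ₀ + u)) := by
      rw [hrefl (fun u => p u * Gd σbarsq s (t - τ₀ - u)) 0 τnz]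
      rw [show -(0:ℝ) = 0 from neg_zero]
      apply setIntegral_congr_fun measurableSet_Ioo
      intro u hu
      dsimp only
      rw [hp_odd u, hp_neg u hu, sub_neg_eq_add]
      ring
    -- integrabilities for combining
    have hi1 : IntegrableOn (fun u => q u * Gd σbarsq s (t - τ₀ - u)) (Set.Ioo (-τnz) 0) :=
      key_int _ _ _
        (hq_aesm.mul ((hGs_cont.comp (continuous_const.sub continuous_id)
          ).aestronglyMeasurable.restrict))
        (fun u => habs _ _ (hq_abs u))
    have hi2 : IntegrableOn (fun u => q u * Gd σbarsq s (t - τ₀ + u)) (Set.Ioo (-τnz) 0) :=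
      key_int _ _ _
        (hq_aesm.mul ((hGs_cont.comp (continuous_const.add continuous_id)
          ).aestronglyMeasurable.restrict))
        (fun u => habs _ _ (hq_abs u))
    have hcombine : (∫ u in Set.Ioo (-τnz) 0, q u * Gd σbarsq s (t - τ₀ - u))
        + (∫ u in Set.Ioo (-τnz) 0, -(q u * Gd σbarsq s (t - τ₀ + u)))
        = ∫ u in Set.Ioo (-τnz) 0,
            q u * (Gd σbarsq s (t - τ₀ - u) - Gd σbarsq s (t - τ₀ + u)) := by
      rw [integral_neg, ← sub_eq_add_neg, ← integral_sub hi1 hi2]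
      simp only [mul_sub]
    -- pointwise positivity
    have hptwise : ∀ u ∈ Set.Ioo (-τnz) (0:ℝ),
        0 < q u * (Gd σbarsq s (t - τ₀ - u) - Gd σbarsq s (t - τ₀ + u)) := by
      intro u hu
      apply mul_pos (hq_pos u hu)
      rw [sub_pos]
      unfold Gd
      have hcpos : 0 < s * (Real.sqrt (2 * Real.pi * σbarsq))⁻¹ := by positivity
      apply mul_lt_mul_of_pos_left _ hcpos
      rw [Real.exp_lt_exp]
      have hxu : 0 < (t - τ₀) * u := mul_pos_of_neg_of_neg hx2 hu.2
      have hsq : ((t - τ₀) - u) ^ 2 < ((t - τ₀) + u) ^ 2 := by nlinarith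
      have hspos : 0 < s ^ 2 * (2 * σbarsq)⁻¹ := by positivity
      nlinarith [mul_lt_mul_of_pos_right hsq hspos]
    -- positivity of the combined integral
    have hpos : 0 < ∫ u in Set.Ioo (-τnz) 0,
        q u * (Gd σbarsq s (t - τ₀ - u) - Gd σbarsq s (t - τ₀ + u)) := by
      have hint : IntegrableOn
          (fun u => q u * (Gd σbarsq s (t - τ₀ - u) - Gd σbarsq s (t - τ₀ + u)))
          (Set.Ioo (-τnz) 0) := by
        have := hi1.sub hi2
        simpa [mul_sub, Pi.sub_def] using this
      have hfnonneg : 0 ≤ᵐ[volume.restrict (Set.Ioo (-τnz) (0:ℝ))]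
          fun u => q u * (Gd σbarsq s (t - τ₀ - u) - Gd σbarsq s (t - τ₀ + u)) := by
        have h9 : ∀ᵐ u ∂(volume.restrict (Set.Ioo (-τnz) (0:ℝ))),
            0 ≤ q u * (Gd σbarsq s (t - τ₀ - u) - Gd σbarsq s (t - τ₀ + u)) := by
          rw [ae_restrict_iff' measurableSet_Ioo]
          exact Filter.Eventually.of_forall fun u hu => (hptwise u hu).le
        exact h9
      rw [setIntegral_pos_iff_support_of_nonneg_ae hfnonneg hint]
      refine lt_of_lt_of_le ?_ (measure_mono (fun u hu => ⟨ne_of_gt (hptwise u hu), hu⟩))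
      rw [Real.volume_Ioo]
      simp only [sub_neg_eq_add, zero_add]
      exact ENNReal.ofReal_pos.2 hτnz
    rw [hswap t s, hsplit, hpiece1, hpiece2, hcombine]
    exact hpos
  -- support of fα has positive measure
  have hsupp_pos : 0 < volume (Function.support fα ∩ Set.Ioc αlow αup) := by
    have hfnn : 0 ≤ᵐ[volume.restrict (Set.Ioc αlow αup)] fα :=
      Filter.Eventually.of_forall fun s => hfα_nonneg s
    have h1 : 0 < ∫ s in Set.Ioc αlow αup, fα s := by
      rw [← intervalIntegral.integral_of_le hαord, hfα_int]
      exact one_pos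
    exact (setIntegral_pos_iff_support_of_nonneg_ae hfnn hfα_intOn).1 h1
  have hCpos : 0 < Amax * (∫ ω, K 0 ω ∂P) := mul_pos hA hK_mean_pos
  have hηpos : ∀ t ∈ Set.Ioo (τ₀ - τnz) τ₀, 0 < η t := by
    intro t ht
    rw [hηG t]
    apply mul_pos hCpos
    have hnn : 0 ≤ᵐ[volume.restrict (Set.Ioc αlow αup)]
        fun s => (∫ ψ, p (t - τ₀ - ψ) * Gd σbarsq s ψ) * fα s := by
      have h9 : ∀ᵐ s ∂(volume.restrict (Set.Ioc αlow αup)),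
          0 ≤ (∫ ψ, p (t - τ₀ - ψ) * Gd σbarsq s ψ) * fα s := by
        rw [ae_restrict_iff' measurableSet_Ioc]
        apply Filter.Eventually.of_forall
        intro s hs
        exact mul_nonneg (hIpos t ht s (lt_trans hαlow hs.1)).le (hfα_nonneg s)
      exact h9
    rw [setIntegral_pos_iff_support_of_nonneg_ae hnn (hIintOn t)]
    refine lt_of_lt_of_le hsupp_pos (measure_mono ?_)
    rintro s ⟨hs1, hs2⟩
    refine ⟨?_, hs2⟩
    have hs0 : 0 < s := lt_trans hαlow hs2.1
    have hfs : 0 < fα s := lt_of_le_of_ne (hfα_nonneg s) (Ne.symm hs1)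
    exact ne_of_gt (mul_pos (hIpos t ht s hs0) hfs)
  have hηneg : ∀ t ∈ Set.Ioo τ₀ (τ₀ + τnz), η t < 0 := by
    intro t ht
    have h1 := hodd (t - τ₀)
    have h2 : 0 < η (τ₀ - (t - τ₀)) := by
      apply hηpos
      constructor
      · linarith [ht.2]
      · linarith [ht.1]
    have h3 : η (τ₀ + (t - τ₀)) < 0 := by linarith
    have h4 : τ₀ + (t - τ₀) = t := by ring
    rwa [h4] at h3
  refine ⟨?_, hη0, ⟨τnz, hτnz, le_refl _, hηpos, hηneg⟩, ?_, hηcont⟩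
  · -- almost sure convergence
    intro t
    have hXmeas : ∀ i, Measurable (fun ω => Amax * K i ω * p (t - τ₀ - T i ω)) := fun i =>
      (measurable_const.mul (hK_meas i)).mul (hp_meas.comp (measurable_const.sub (hT_meas i)))
    have hXbdd : ∀ i ω, |Amax * K i ω * p (t - τ₀ - T i ω)| ≤ Amax := by
      intro i ω
      rw [abs_mul, abs_mul, abs_of_pos hA]
      have h1 : |K i ω| ≤ 1 := by
        rcases hK_range i ω with ⟨ha, hb⟩
        rw [abs_of_nonneg ha]
        exact hb
      calc Amax * |K i ω| * |p (t - τ₀ - T i ω)| ≤ Amax * 1 * 1 := by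
            apply mul_le_mul (mul_le_mul_of_nonneg_left h1 hA.le) (hp_abs _)
              (abs_nonneg _) (by positivity)
      _ = Amax := by ring
    have hSum_meas : ∀ k : ℕ ⊕ ℕ, Measurable (Sum.elim T K k) := by
      rintro (i | i)
      · exact hT_meas i
      · exact hK_meas i
    have hXindep : Pairwise fun i j => IndepFun (fun ω => Amax * K i ω * p (t - τ₀ - T i ω))
        (fun ω => Amax * K j ω * p (t - τ₀ - T j ω)) P := by
      intro i j hij
      have hpair : IndepFun (fun ω => (T i ω, K i ω)) (fun ω => (T j ω, K j ω)) P :=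
        hindep.indepFun_prodMk_prodMk hSum_meas (Sum.inl i) (Sum.inr i) (Sum.inl j) (Sum.inr j)
          (by simpa using hij) (by simp) (by simp) (by simpa using hij)
      have hφ : Measurable fun v : ℝ × ℝ => Amax * v.2 * p (t - τ₀ - v.1) :=
        (measurable_const.mul measurable_snd).mul (hp_meas.comp (measurable_const.sub measurable_fst))
      exact hpair.comp hφ hφ
    have hslln := slln_of_bounded' P (fun i ω => Amax * K i ω * p (t - τ₀ - T i ω)) Amax
      hA.le hXmeas hXbdd hXindep
    filter_upwards [hslln] with ω hω
    have hkey : Tendsto (fun N : ℕ => (1 / (N : ℝ)) * ∑ i ∈ Finset.range N,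
        (Amax * K i ω * p (t - τ₀ - T i ω)
          - ∫ ω', Amax * K i ω' * p (t - τ₀ - T i ω') ∂P)) atTop (nhds 0) := hω
    have hadd := hkey.add (hmean t)
    rw [zero_add] at hadd
    have hfeq : (fun N : ℕ => (1 / (N : ℝ)) *
        ∑ i ∈ Finset.range N, Amax * K i ω * p (t - τ₀ - T i ω))
        = fun N : ℕ => ((1 / (N : ℝ)) * ∑ i ∈ Finset.range N,
            (Amax * K i ω * p (t - τ₀ - T i ω)
              - ∫ ω', Amax * K i ω' * p (t - τ₀ - T i ω') ∂P))
          + (1 / (N : ℝ)) * ∑ i ∈ Finset.range N,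
              ∫ ω', Amax * K i ω' * p (t - τ₀ - T i ω') ∂P := by
      funext N
      rw [← mul_add, ← Finset.sum_add_distrib]
      congr 1
      apply Finset.sum_congr rfl
      intro i _
      ring
    rw [hfeq]
    exact hadd
  · -- oddness
    intro ξ _
    have := hodd ξ
    linarith
end

section
/- Fix τ₀ ∈ ℝ, τ₁ < τ₀, A_max > 0, constants 0 < α_low ≤ α_up < ∞, σ̄² > 0 and B < ∞. Let T_i (i ∈ ℕ) be independent random variables with T_i ~ N(0, σ̄²/α_i²), where α_i ∈ [α_low, α_up] and σ̄²/α_i² < B for all i. Let K_i be i.i.d. random variables with values in [0,1], 0 < E(K₁) ≤ 1 and Var(K₁) ≤ 1, independent of all the T_i. Define M̄_i(τ₁) = A_max·K_i·p(τ₁ − τ₀ − T_i), with mean μ_i and variance σ_i², and suppose (1/N)·Σ_{i=1}^N μ_i → η(τ₁) = A_max·E(K₁)·∫_{α_low}^{α_up} ∫_ℝ p(τ₁ − τ₀ − ψ)·f_T(ψ, s) dψ·f_α(s) ds as N → ∞. Then: (i) there exist constants γ₁, γ₂ with 0 < γ₁ < μ_i < γ₂ for all i; (ii) there exists a constant γ₃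 < ∞ with σ_i² < γ₃ for all i; and (iii) (1/N)·Σ_{i=1}^N M̄_i(τ₁) → η(τ₁) almost surely as N → ∞, with η(τ₁) > 0. -/
open MeasureTheory ProbabilityTheory Filter Set
open scoped NNReal
open scoped ENNReal

lemma my_integrable_of_bdd {Ω : Type*} [MeasurableSpace Ω] {P : Measure Ω} [IsFiniteMeasure P]
    {f : Ω → ℝ} (hf : AEStronglyMeasurable f P) {c : ℝ} (h : ∀ ω, |f ω| ≤ c) :
    Integrable f P :=
  memLp_one_iff_integrable.mp <|
    memLp_of_bounded (ae_of_all _ fun ω => abs_le.mp (h ω)) hf 1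

lemma my_gap_tendsto {C : ℝ} (hC : 0 < C) (Z : ℕ → ℝ) (hZ : ∀ i, |Z i| ≤ C)
    (h : Tendsto (fun k : ℕ => (1 / ((((k + 1) ^ 2 : ℕ) : ℝ))) *
        ∑ i ∈ Finset.range ((k + 1) ^ 2), Z i) atTop (nhds 0)) :
    Tendsto (fun n : ℕ => (1 / (n : ℝ)) * ∑ i ∈ Finset.range n, Z i) atTop (nhds 0) := by
  set A : ℕ → ℝ := fun n => (1 / (n : ℝ)) * ∑ i ∈ Finset.range n, Z i with hA
  have hS : ∀ n : ℕ, |∑ i ∈ Finset.range n, Z i| ≤ n * C := by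
    intro n
    calc |∑ i ∈ Finset.range n, Z i| ≤ ∑ i ∈ Finset.range n, |Z i| :=
          Finset.abs_sum_le_sum_abs _ _
      _ ≤ ∑ _i ∈ Finset.range n, C := Finset.sum_le_sum fun i _ => hZ i
      _ = n * C := by simp [mul_comm]
  have key : ∀ m n : ℕ, 1 ≤ m → m ≤ n → |A n - A m| ≤ 2 * C * ((n : ℝ) - m) / n := by
    intro m n hm hmn
    have hmnR : (m : ℝ) ≤ (n : ℝ) := by exact_mod_cast hmn
    have hmpos : (0 : ℝ) < m := by exact_mod_cast hm
    have hnpos : (0 : ℝ) < n := lt_of_lt_of_le hmpos hmnR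
    have hR : ∑ i ∈ Finset.Ico m n, Z i
        = ∑ i ∈ Finset.range n, Z i - ∑ i ∈ Finset.range m, Z i :=
      Finset.sum_Ico_eq_sub _ hmn
    set sm : ℝ := ∑ i ∈ Finset.range m, Z i with hsm
    set r : ℝ := ∑ i ∈ Finset.Ico m n, Z i with hr
    have hsn : ∑ i ∈ Finset.range n, Z i = sm + r := by rw [hR]; ring
    have hrb : |r| ≤ ((n : ℝ) - m) * C := by
      calc |r| ≤ ∑ i ∈ Finset.Ico m n, |Z i| := Finset.abs_sum_le_sum_abs _ _
        _ ≤ ∑ _i ∈ Finset.Ico m n, C := Finset.sum_le_sum fun i _ => hZ i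
        _ = ((n : ℝ) - m) * C := by
            rw [Finset.sum_const, Nat.card_Ico, nsmul_eq_mul, Nat.cast_sub hmn]
    have hsmb : |sm| ≤ m * C := hS m
    have heq : A n - A m = r / n - sm * (((n : ℝ) - m) / (m * n)) := by
      rw [hA]
      simp only [hsn]
      field_simp
      ring
    rw [heq]
    have h1 : |r / n - sm * (((n : ℝ) - m) / (m * n))|
        ≤ |r / n| + |sm * (((n : ℝ) - m) / (m * n))| := abs_sub _ _
    have h2 : |r / n| = |r| / n := by rw [abs_div, abs_of_pos hnpos]
    have h3 : |sm * (((n : ℝ) - m) / (m * n))| = |sm| * (((n : ℝ) - m) / (m * n)) := by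
      rw [abs_mul, abs_div, abs_of_nonneg (by linarith : (0:ℝ) ≤ (n:ℝ) - m),
        abs_of_pos (by positivity : (0:ℝ) < (m : ℝ) * n)]
    have h4 : |r| / n ≤ ((n : ℝ) - m) * C / n :=
      div_le_div_of_nonneg_right hrb hnpos.le
    have h5 : |sm| * (((n : ℝ) - m) / (m * n)) ≤ (m * C) * (((n : ℝ) - m) / (m * n)) :=
      mul_le_mul_of_nonneg_right hsmb (div_nonneg (by linarith) (by positivity))
    have h6 : (m * C) * (((n : ℝ) - m) / (m * n)) = C * ((n : ℝ) - m) / n := by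
      field_simp
    calc |r / n - sm * (((n : ℝ) - m) / (m * n))|
        ≤ |r| / n + |sm| * (((n : ℝ) - m) / (m * n)) := by rw [← h2, ← h3]; exact h1
      _ ≤ ((n : ℝ) - m) * C / n + C * ((n : ℝ) - m) / n := by
          rw [← h6]; exact add_le_add h4 h5
      _ = 2 * C * ((n : ℝ) - m) / n := by ring
  rw [Metric.tendsto_atTop] at h ⊢
  intro ε hε
  obtain ⟨K, hK⟩ := h (ε / 2) (half_pos hε)
  set s0 : ℕ := max (K + 1) (⌈8 * C / ε⌉₊ + 1) with hs0
  have hs0K : K + 1 ≤ s0 := le_max_left _ _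
  have hs01 : 1 ≤ s0 := le_trans (Nat.le_add_left 1 K) hs0K
  have hs0big : 8 * C / ε < s0 := by
    have h1 : (⌈8 * C / ε⌉₊ : ℝ) + 1 ≤ (s0 : ℝ) := by exact_mod_cast le_max_right (K+1) _
    have h2 : 8 * C / ε ≤ (⌈8 * C / ε⌉₊ : ℝ) := Nat.le_ceil _
    linarith
  refine ⟨s0 ^ 2, fun n hn => ?_⟩
  set s : ℕ := Nat.sqrt n with hs
  have hss0 : s0 ≤ s := Nat.le_sqrt.mpr (by calc s0 * s0 = s0 ^ 2 := (sq s0).symm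
    _ ≤ n := hn)
  have hs1 : 1 ≤ s := le_trans hs01 hss0
  have hm_le : s ^ 2 ≤ n := Nat.sqrt_le' n
  have hm1 : 1 ≤ s ^ 2 := Nat.one_le_iff_ne_zero.mpr (by positivity)
  have hn_lt : n < (s + 1) * (s + 1) := Nat.lt_succ_sqrt n
  -- real versions
  have hsR : (1 : ℝ) ≤ (s : ℝ) := by exact_mod_cast hs1
  have hsR0 : (0 : ℝ) < (s : ℝ) := by linarith
  have hnR : ((s : ℝ)) ^ 2 ≤ (n : ℝ) := by exact_mod_cast hm_le
  have hnR0 : (0 : ℝ) < (n : ℝ) := lt_of_lt_of_le (by positivity) hnR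
  have hn_le : n ≤ s * s + 2 * s := by
    have h2 : n < s * s + 2 * s + 1 := by
      calc n < (s + 1) * (s + 1) := hn_lt
        _ = s * s + 2 * s + 1 := by ring
    exact Nat.lt_succ_iff.mp h2
  have hgap : ((n : ℝ)) - (s : ℝ) ^ 2 ≤ 2 * s := by
    have h3 : (n : ℝ) ≤ (s : ℝ) * s + 2 * s := by exact_mod_cast hn_le
    have hs2 : (s : ℝ) ^ 2 = (s : ℝ) * s := sq (s : ℝ)
    linarith
  -- |A n - A (s^2)| ≤ 2C(n - s²)/n ≤ 4C/s
  have hkey := key (s ^ 2) n hm1 hm_le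
  have hb1 : 2 * C * ((n : ℝ) - (s ^ 2 : ℕ)) / n ≤ 4 * C / s := by
    rw [div_le_div_iff₀ hnR0 hsR0]
    have hcast : ((s ^ 2 : ℕ) : ℝ) = (s : ℝ) ^ 2 := by push_cast; ring
    rw [hcast]
    have base := mul_le_mul_of_nonneg_left hgap (show (0:ℝ) ≤ 2*C by linarith)
    have e1 := mul_le_mul_of_nonneg_right base hsR0.le
    have e3 : 4*C*(s:ℝ)^2 ≤ 4*C*n := mul_le_mul_of_nonneg_left hnR (by linarith)
    nlinarith [e1, e3]
  have hb2 : 4 * C / (s : ℝ) ≤ 4 * C / (s0 : ℝ) := by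
    apply div_le_div_of_nonneg_left (by linarith) (by exact_mod_cast hs01) (by exact_mod_cast hss0)
  have hs0R : (0 : ℝ) < (s0 : ℝ) := by exact_mod_cast hs01
  have hb3 : 4 * C / (s0 : ℝ) < ε / 2 := by
    rw [div_lt_iff₀ hs0R]
    rw [div_lt_iff₀ hε] at hs0big
    nlinarith
  -- |A (s^2)| < ε/2 via subsequence
  have hsub : dist (A (((s - 1) + 1) ^ 2)) 0 < ε / 2 := hK (s - 1) (by omega)
  have hs_id : (s - 1) + 1 = s := Nat.succ_pred_eq_of_pos hs1
  rw [hs_id] at hsub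
  rw [Real.dist_eq, sub_zero] at hsub ⊢
  calc |A n| ≤ |A n - A (s ^ 2)| + |A (s ^ 2)| := by
        have := abs_sub (A n - A (s ^ 2)) (- A (s ^ 2))
        simpa [sub_neg_eq_add, abs_neg] using this
    _ < ε / 2 + ε / 2 := by
        apply add_lt_add_of_le_of_lt _ hsub
        exact le_trans hkey (lt_of_le_of_lt (le_trans hb1 hb2) hb3).le
    _ = ε := by ring

/-- Strong law of large numbers for uniformly bounded, pairwise independent real random
variables (means subtracted). -/
lemma my_slln_bdd {Ω : Type*} [MeasurableSpace Ω] (P : Measure Ω) [IsProbabilityMeasure P]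
    (Y : ℕ → Ω → ℝ) (C : ℝ) (hC : 0 < C) (hmeas : ∀ i, Measurable (Y i))
    (hbdd : ∀ i ω, |Y i ω| ≤ C)
    (hpair : Pairwise fun i j => IndepFun (Y i) (Y j) P) :
    ∀ᵐ ω ∂P, Tendsto (fun n : ℕ => (1 / (n : ℝ)) *
      ∑ i ∈ Finset.range n, (Y i ω - ∫ ω', Y i ω' ∂P)) atTop (nhds 0) := by
  have hmem : ∀ i, MemLp (Y i) 2 P := fun i =>
    memLp_of_bounded (ae_of_all _ fun ω => abs_le.mp (hbdd i ω))
      (hmeas i).aestronglyMeasurable 2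
  set μi : ℕ → ℝ := fun i => ∫ ω', Y i ω' ∂P with hμi
  have hμb : ∀ i, |μi i| ≤ C := by
    intro i
    have h := norm_integral_le_of_norm_le_const (μ := P) (f := Y i) (C := C)
      (ae_of_all _ fun ω => by rw [Real.norm_eq_abs]; exact hbdd i ω)
    simpa [Real.norm_eq_abs] using h
  set Z : ℕ → Ω → ℝ := fun i ω => Y i ω - μi i with hZ
  have hZbdd : ∀ i ω, |Z i ω| ≤ 2 * C := by
    intro i ω
    calc |Y i ω - μi i| ≤ |Y i ω| + |μi i| := abs_sub _ _
      _ ≤ 2 * C := by have := hbdd i ω; have := hμb i; linarith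
  set D : ℕ → Ω → ℝ := fun n ω => (1 / (n : ℝ)) * ∑ i ∈ Finset.range n, Z i ω with hD
  have hZmeas : ∀ i, Measurable (Z i) := fun i => (hmeas i).sub measurable_const
  have hDmeas : ∀ n, Measurable (D n) := fun n =>
    (measurable_const.mul (Finset.measurable_sum _ fun i _ => hZmeas i))
  have hDbdd : ∀ n ω, |D n ω| ≤ 2 * C := by
    intro n ω
    rcases Nat.eq_zero_or_pos n with h0 | hn
    · simp [hD, h0]; positivity
    have hnR : (0 : ℝ) < n := by exact_mod_cast hn
    have hsum : |∑ i ∈ Finset.range n, Z i ω| ≤ n * (2 * C) := by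
      calc |∑ i ∈ Finset.range n, Z i ω| ≤ ∑ i ∈ Finset.range n, |Z i ω| :=
            Finset.abs_sum_le_sum_abs _ _
        _ ≤ ∑ _i ∈ Finset.range n, (2 * C) := Finset.sum_le_sum fun i _ => hZbdd i ω
        _ = n * (2 * C) := by simp [mul_comm]
    rw [hD]
    simp only [abs_mul]
    rw [abs_of_nonneg (by positivity : (0:ℝ) ≤ 1 / (n:ℝ))]
    calc 1 / (n : ℝ) * |∑ i ∈ Finset.range n, Z i ω| ≤ 1 / n * (n * (2 * C)) := by
          apply mul_le_mul_of_nonneg_left hsum (by positivity)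
      _ = 2 * C := by field_simp
  -- variance bound for partial sums
  have hvar : ∀ n : ℕ, ∫ ω, (∑ i ∈ Finset.range n, Z i ω) ^ 2 ∂P ≤ n * C ^ 2 := by
    intro n
    have hmems : ∀ i ∈ Finset.range n, MemLp (Y i) 2 P := fun i _ => hmem i
    have hpairs : (↑(Finset.range n) : Set ℕ).Pairwise
        fun i j => IndepFun (Y i) (Y j) P := fun i _ j _ hij => hpair hij
    have hsum := IndepFun.variance_sum (μ := P) hmems hpairs
    have hYint : ∀ i, Integrable (Y i) P := fun i => (hmem i).integrable one_le_two
    have hWmem : MemLp (∑ i ∈ Finset.range n, Y i) 2 P := memLp_finsetSum' _ hmems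
    have hveq : variance (∑ i ∈ Finset.range n, Y i) P
        = ∫ ω, (∑ i ∈ Finset.range n, Z i ω) ^ 2 ∂P := by
      rw [variance_eq_integral hWmem.aestronglyMeasurable.aemeasurable]
      apply integral_congr_ae
      apply ae_of_all
      intro ω
      have hint : ∫ x, ∑ c ∈ Finset.range n, Y c x ∂P = ∑ i ∈ Finset.range n, μi i :=
        integral_finset_sum _ fun i _ => hYint i
      simp only [Pi.pow_apply, Pi.sub_apply, Finset.sum_apply]
      rw [hint, Finset.sum_sub_distrib]
    have hvle : ∀ i ∈ Finset.range n, variance (Y i) P ≤ C ^ 2 := by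
      intro i _
      have := variance_le_sq_of_bounded (μ := P) (a := -C) (b := C)
        (ae_of_all _ fun ω => abs_le.mp (hbdd i ω)) (hmeas i).aemeasurable
      calc variance (Y i) P ≤ ((C - (-C)) / 2) ^ 2 := this
        _ = C ^ 2 := by ring
    calc ∫ ω, (∑ i ∈ Finset.range n, Z i ω) ^ 2 ∂P
        = ∑ i ∈ Finset.range n, variance (Y i) P := by rw [← hveq, hsum]
      _ ≤ ∑ _i ∈ Finset.range n, C ^ 2 := Finset.sum_le_sum hvle
      _ = n * C ^ 2 := by simp [mul_comm]
  have hDsq_int : ∀ n, Integrable (fun ω => (D n ω) ^ 2) P := by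
    intro n
    apply my_integrable_of_bdd ((hDmeas n).pow_const 2).aestronglyMeasurable
      (c := (2 * C) ^ 2)
    intro ω
    calc |(D n ω) ^ 2| = |D n ω| ^ 2 := abs_pow _ _
      _ ≤ (2 * C) ^ 2 := pow_le_pow_left₀ (abs_nonneg _) (hDbdd n ω) 2
  -- second moment of averages
  have hDvar : ∀ n : ℕ, 1 ≤ n → ∫ ω, (D n ω) ^ 2 ∂P ≤ C ^ 2 / n := by
    intro n hn
    have hnR : (0 : ℝ) < n := by exact_mod_cast hn
    have h1 : ∀ ω, (D n ω) ^ 2 = (1 / (n:ℝ))^2 * (∑ i ∈ Finset.range n, Z i ω) ^ 2 := by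
      intro ω; rw [hD]; ring
    calc ∫ ω, (D n ω) ^ 2 ∂P
        = (1 / (n:ℝ))^2 * ∫ ω, (∑ i ∈ Finset.range n, Z i ω) ^ 2 ∂P := by
          simp_rw [h1]; rw [integral_const_mul]
      _ ≤ (1 / (n:ℝ))^2 * (n * C ^ 2) := by
          apply mul_le_mul_of_nonneg_left (hvar n) (by positivity)
      _ = C ^ 2 / n := by field_simp
  -- a.e. convergence along squares via summability
  set g : ℕ → Ω → ℝ≥0∞ := fun k ω => ENNReal.ofReal ((D ((k + 1) ^ 2) ω) ^ 2) with hg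
  have hgmeas : ∀ k, Measurable (g k) := fun k =>
    ((hDmeas _).pow_const 2).ennreal_ofReal
  have hglint : ∀ k, ∫⁻ ω, g k ω ∂P ≤ ENNReal.ofReal (C ^ 2 / ((k:ℝ) + 1) ^ 2) := by
    intro k
    rw [hg]
    rw [← ofReal_integral_eq_lintegral_ofReal (hDsq_int _) (ae_of_all _ fun ω => sq_nonneg _)]
    apply ENNReal.ofReal_le_ofReal
    have := hDvar ((k + 1) ^ 2) (Nat.one_le_iff_ne_zero.mpr (by positivity))
    calc ∫ ω, (D ((k+1)^2) ω) ^ 2 ∂P ≤ C ^ 2 / (((k+1)^2 : ℕ) : ℝ) := this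
      _ = C ^ 2 / ((k:ℝ) + 1) ^ 2 := by push_cast; ring_nf
  have hsummable : Summable (fun k : ℕ => C ^ 2 / ((k:ℝ) + 1) ^ 2) := by
    have h1 : Summable (fun n : ℕ => C ^ 2 * (1 / (n:ℝ) ^ 2)) :=
      (Real.summable_one_div_nat_pow.mpr one_lt_two).mul_left (C ^ 2)
    have h2 := (summable_nat_add_iff 1).mpr h1
    apply h2.congr
    intro k
    push_cast
    field_simp
  have htsum_ne : ∑' k, ∫⁻ ω, g k ω ∂P ≠ ⊤ := by
    apply ne_top_of_le_ne_top _ (ENNReal.tsum_le_tsum hglint)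
    rw [← ENNReal.ofReal_tsum_of_nonneg (fun k => by positivity) hsummable]
    exact ENNReal.ofReal_ne_top
  have hae : ∀ᵐ ω ∂P, ∑' k, g k ω < ⊤ := by
    apply ae_lt_top (Measurable.ennreal_tsum hgmeas)
    rw [lintegral_tsum fun k => (hgmeas k).aemeasurable]
    exact htsum_ne
  filter_upwards [hae] with ω hω
  -- convergence along squares
  have h0 : Tendsto (fun k => g k ω) atTop (nhds 0) :=
    ENNReal.tendsto_atTop_zero_of_tsum_ne_top hω.ne
  have h1 : Tendsto (fun k => (D ((k + 1) ^ 2) ω) ^ 2) atTop (nhds 0) := by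
    have h2 := (ENNReal.tendsto_toReal (by simp : (0:ℝ≥0∞) ≠ ⊤)).comp h0
    simp only [ENNReal.toReal_zero] at h2
    apply h2.congr
    intro k
    simp only [Function.comp_apply, hg, ENNReal.toReal_ofReal (sq_nonneg _)]
  have habs : Tendsto (fun k => |D ((k + 1) ^ 2) ω|) atTop (nhds 0) := by
    have h3 := (Real.continuous_sqrt.tendsto 0).comp h1
    simp only [Real.sqrt_zero] at h3
    apply h3.congr
    intro k
    simp only [Function.comp_apply, Real.sqrt_sq_eq_abs]
  have h2 : Tendsto (fun k => D ((k + 1) ^ 2) ω) atTop (nhds 0) := by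
    have hneg : Tendsto (fun k => -|D ((k + 1) ^ 2) ω|) atTop (nhds 0) := by
      simpa using habs.neg
    exact tendsto_of_tendsto_of_tendsto_of_le_of_le hneg habs
      (fun k => neg_abs_le _) (fun k => le_abs_self _)
  exact my_gap_tendsto (by linarith : (0:ℝ) < 2 * C) (fun i => Z i ω)
    (fun i => hZbdd i ω) h2


set_option maxHeartbeats 2000000 in
/-- **Lemma 1 of the paper.** For `τ₁ < τ₀`, the means of the pulse contributions `M̄ᵢ(τ₁) = A_max Kᵢ p(τ₁ - τ₀ - Tᵢ)` are uniformly bounded between positive constants, their variances are uniformly bounded, and the empirical averages converge almost surely to the positive limit `η(τ₁)`. -/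
theorem pulse_contributions_positive_left_of_crossing
    (τnz : ℝ) (hτnz : 0 < τnz) (q p : ℝ → ℝ)
    (hq_pos : ∀ t ∈ Set.Ioo (-τnz) 0, 0 < q t)
    (hq_zero : ∀ t, t ∉ Set.Ioo (-τnz) 0 → q t = 0)
    (hq_sup : (⨆ t, |q t|) = 1)
    (hq_uc : UniformContinuousOn q (Set.Ioo (-τnz) 0))
    (hp_neg : ∀ t ∈ Set.Ioo (-τnz) 0, p t = q t)
    (hp_pos : ∀ t ∈ Set.Ioo 0 τnz, p t = -q (-t))
    (hp_zero : p 0 = 0)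
    (hp_out : ∀ t, t ≤ -τnz ∨ τnz ≤ t → p t = 0)
    (hp_meas : Measurable p)
    {Ω : Type*} [MeasurableSpace Ω] (P : Measure Ω) [IsProbabilityMeasure P]
    (τ₀ τ₁ : ℝ) (hτord : τ₁ < τ₀) (Amax : ℝ) (hA : 0 < Amax)
    (αlow αup : ℝ) (hαlow : 0 < αlow) (hαord : αlow ≤ αup)
    (σbarsq : ℝ) (hσ : 0 < σbarsq) (B : ℝ)
    (α : ℕ → ℝ) (hα : ∀ i, α i ∈ Set.Icc αlow αup)
    (hαB : ∀ i, σbarsq / (α i) ^ 2 < B)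
    (T K : ℕ → Ω → ℝ)
    (hT_meas : ∀ i, Measurable (T i)) (hK_meas : ∀ i, Measurable (K i))
    (hT_law : ∀ i, Measure.map (T i) P = gaussianReal 0 (σbarsq / (α i) ^ 2).toNNReal)
    (hK_range : ∀ i ω, K i ω ∈ Set.Icc (0 : ℝ) 1)
    (hK_ident : ∀ i, Measure.map (K i) P = Measure.map (K 0) P)
    (hK_mean_pos : 0 < ∫ ω, K 0 ω ∂P) (hK_mean_le : ∫ ω, K 0 ω ∂P ≤ 1)
    (hK_var : variance (K 0) P ≤ 1)
    (hindep : iIndepFun (Sum.elim T K) P)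
    (fα : ℝ → ℝ) (Gα : ℝ)
    (hfα_nonneg : ∀ s, 0 ≤ fα s)
    (hfα_supp : ∀ s, s ∉ Set.Icc αlow αup → fα s = 0)
    (hfα_int : ∫ s in αlow..αup, fα s = 1)
    (hfα_bdd : ∀ s, |fα s| ≤ Gα)
    (μ σsqi : ℕ → ℝ)
    (hμ : ∀ i, μ i = ∫ ω, Amax * K i ω * p (τ₁ - τ₀ - T i ω) ∂P)
    (hσi : ∀ i, σsqi i = variance (fun ω => Amax * K i ω * p (τ₁ - τ₀ - T i ω)) P)
    (ηval : ℝ)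
    (hηval : ηval = Amax * (∫ ω, K 0 ω ∂P) *
      ∫ s in αlow..αup,
        (∫ ψ, p (τ₁ - τ₀ - ψ) * gaussianPDFReal 0 (σbarsq / s ^ 2).toNNReal ψ) * fα s)
    (hmean : Tendsto (fun N : ℕ => (1 / (N : ℝ)) * ∑ i ∈ Finset.range N, μ i)
      atTop (nhds ηval)) :
    (∃ γ₁ γ₂ : ℝ, 0 < γ₁ ∧ ∀ i, γ₁ < μ i ∧ μ i < γ₂) ∧
    (∃ γ₃ : ℝ, ∀ i, σsqi i < γ₃) ∧
    0 < ηval ∧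
    (∀ᵐ ω ∂P, Tendsto
      (fun N : ℕ => (1 / (N : ℝ)) *
        ∑ i ∈ Finset.range N, Amax * K i ω * p (τ₁ - τ₀ - T i ω))
      atTop (nhds ηval)) := by
  have hc : τ₁ - τ₀ < 0 := by linarith
  have hαup : 0 < αup := lt_of_lt_of_le hαlow hαord
  -- |q| ≤ 1 and |p| ≤ 1
  have hqb : ∀ t, |q t| ≤ 1 := by
    have hbddq : BddAbove (range fun t => |q t|) := by
      by_contra hcon
      rw [Real.iSup_of_not_bddAbove hcon] at hq_sup
      norm_num at hq_sup
    intro t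
    rw [← hq_sup]
    exact le_ciSup hbddq t
  have hpb : ∀ t, |p t| ≤ 1 := by
    intro t
    rcases lt_trichotomy t 0 with h | h | h
    · rcases le_or_gt t (-τnz) with h2 | h2
      · rw [hp_out t (Or.inl h2)]; simp
      · rw [hp_neg t ⟨h2, h⟩]; exact hqb t
    · rw [h, hp_zero]; simp
    · rcases le_or_gt τnz t with h2 | h2
      · rw [hp_out t (Or.inr h2)]; simp
      · rw [hp_pos t ⟨h, h2⟩, abs_neg]; exact hqb _
  -- the random variables
  set Y : ℕ → Ω → ℝ := fun i ω => Amax * K i ω * p (τ₁ - τ₀ - T i ω) with hY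
  have hYmeas : ∀ i, Measurable (Y i) := fun i =>
    (measurable_const.mul (hK_meas i)).mul
      (hp_meas.comp (measurable_const.sub (hT_meas i)))
  have hYbdd : ∀ i ω, |Y i ω| ≤ Amax := by
    intro i ω
    have hK0 := (hK_range i ω).1
    have hK1 := (hK_range i ω).2
    have hpt := hpb (τ₁ - τ₀ - T i ω)
    rw [hY]
    simp only [abs_mul, abs_of_pos hA, abs_of_nonneg hK0]
    calc Amax * K i ω * |p (τ₁ - τ₀ - T i ω)| ≤ Amax * 1 * 1 := by
          apply mul_le_mul (by nlinarith) hpt (abs_nonneg _) (by positivity)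
      _ = Amax := by ring
  -- measurability of the elim family
  have helim_meas : ∀ idx : ℕ ⊕ ℕ, Measurable (Sum.elim T K idx) := by
    intro idx; cases idx with
    | inl i => exact hT_meas i
    | inr i => exact hK_meas i
  -- pairwise independence
  have hYpair : Pairwise fun i j => IndepFun (Y i) (Y j) P := by
    intro i j hij
    have h := hindep.indepFun_prodMk_prodMk helim_meas
      (Sum.inl i) (Sum.inr i) (Sum.inl j) (Sum.inr j)
      (by simp [hij]) (by simp) (by simp) (by simp [hij])
    have hg : Measurable (fun x : ℝ × ℝ => Amax * x.2 * p (τ₁ - τ₀ - x.1)) :=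
      (measurable_const.mul measurable_snd).mul
        (hp_meas.comp (measurable_const.sub measurable_fst))
    exact h.comp hg hg
  -- independence of K i and p(c - T i)
  have hKT_indep : ∀ i, IndepFun (K i) (fun ω => p (τ₁ - τ₀ - T i ω)) P := by
    intro i
    have h := hindep.indepFun (show (Sum.inr i : ℕ ⊕ ℕ) ≠ Sum.inl i by simp)
    exact h.comp measurable_id (hp_meas.comp (measurable_const.sub measurable_id))
  -- integrability
  have hKint : ∀ i, Integrable (K i) P := fun i =>
    my_integrable_of_bdd (hK_meas i).aestronglyMeasurable (c := 1) fun ω => by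
      have := hK_range i ω; rw [abs_of_nonneg this.1]; exact this.2
  have hpcint : ∀ i, Integrable (fun ω => p (τ₁ - τ₀ - T i ω)) P := fun i =>
    my_integrable_of_bdd
      ((hp_meas.comp (measurable_const.sub (hT_meas i))).aestronglyMeasurable)
      (c := 1) fun ω => hpb _
  -- mean of K i equals mean of K 0
  have hKmean : ∀ i, ∫ ω, K i ω ∂P = ∫ ω, K 0 ω ∂P := by
    intro i
    calc ∫ ω, K i ω ∂P = ∫ x, x ∂(Measure.map (K i) P) :=
          (integral_map (hK_meas i).aemeasurable measurable_id.aestronglyMeasurable).symm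
      _ = ∫ x, x ∂(Measure.map (K 0) P) := by rw [hK_ident i]
      _ = ∫ ω, K 0 ω ∂P :=
          integral_map (hK_meas 0).aemeasurable measurable_id.aestronglyMeasurable
  set κ : ℝ := ∫ ω, K 0 ω ∂P with hκ
  -- the Gaussian-expectation function
  set Ifun : ℝ → ℝ := fun v =>
    ∫ x, p (τ₁ - τ₀ - x) * gaussianPDFReal 0 (Real.toNNReal v) x with hIfun
  set vlow : ℝ := σbarsq / αup ^ 2 with hvlow
  set vup : ℝ := σbarsq / αlow ^ 2 with hvup
  have hvlow_pos : 0 < vlow := by rw [hvlow]; positivity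
  have hvord : vlow ≤ vup := by
    rw [hvlow, hvup]
    apply div_le_div_of_nonneg_left hσ.le (by positivity)
    exact pow_le_pow_left₀ hαlow.le hαord 2
  have hvmem : ∀ i, σbarsq / (α i) ^ 2 ∈ Icc vlow vup := by
    intro i
    obtain ⟨h1, h2⟩ := hα i
    have hαi : 0 < α i := lt_of_lt_of_le hαlow h1
    constructor
    · rw [hvlow]
      exact div_le_div_of_nonneg_left hσ.le (by positivity) (pow_le_pow_left₀ hαi.le h2 2)
    · rw [hvup]
      exact div_le_div_of_nonneg_left hσ.le (by positivity) (pow_le_pow_left₀ hαlow.le h1 2)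
  -- expectation of p(c - T i) as an integral against the Gaussian density
  have hTexp : ∀ i, ∫ ω, p (τ₁ - τ₀ - T i ω) ∂P = Ifun (σbarsq / (α i) ^ 2) := by
    intro i
    have hαi : 0 < α i := lt_of_lt_of_le hαlow (hα i).1
    have hvpos : 0 < σbarsq / (α i) ^ 2 := by positivity
    set w : ℝ≥0 := Real.toNNReal (σbarsq / (α i) ^ 2) with hwdef
    have hw0 : w ≠ 0 := (Real.toNNReal_pos.mpr hvpos).ne'
    have hsm : AEStronglyMeasurable (fun x => p (τ₁ - τ₀ - x)) (Measure.map (T i) P) :=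
      (hp_meas.comp (measurable_const.sub measurable_id)).aestronglyMeasurable
    calc ∫ ω, p (τ₁ - τ₀ - T i ω) ∂P
        = ∫ x, p (τ₁ - τ₀ - x) ∂(Measure.map (T i) P) :=
          (integral_map (hT_meas i).aemeasurable hsm).symm
      _ = ∫ x, p (τ₁ - τ₀ - x) ∂(gaussianReal 0 w) := by rw [hT_law i]
      _ = ∫ x, ((gaussianPDFReal 0 w x).toNNReal : ℝ≥0) • p (τ₁ - τ₀ - x) ∂(volume) := by
          rw [gaussianReal_of_var_ne_zero 0 hw0]
          exact integral_withDensity_eq_integral_smul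
            (measurable_gaussianPDFReal 0 w).real_toNNReal _
      _ = Ifun (σbarsq / (α i) ^ 2) := by
          apply integral_congr_ae
          apply ae_of_all
          intro x
          show (gaussianPDFReal 0 w x).toNNReal • p (τ₁ - τ₀ - x)
            = p (τ₁ - τ₀ - x) * gaussianPDFReal 0 (Real.toNNReal (σbarsq / (α i) ^ 2)) x
          rw [NNReal.smul_def, Real.coe_toNNReal _ (gaussianPDFReal_nonneg 0 w x), ← hwdef,
            smul_eq_mul, mul_comm]
  -- factorization of the mean
  have hfact : ∀ i, μ i = Amax * (κ * Ifun (σbarsq / (α i) ^ 2)) := by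
    intro i
    rw [hμ i]
    have he : (fun ω => Amax * K i ω * p (τ₁ - τ₀ - T i ω))
        = fun ω => Amax * ((K i * fun ω' => p (τ₁ - τ₀ - T i ω')) ω) := by
      funext ω; simp [Pi.mul_apply]; ring
    rw [he, integral_const_mul, (hKT_indep i).integral_mul_eq_mul_integral (hKint i).aestronglyMeasurable (hpcint i).aestronglyMeasurable,
      hKmean i, hTexp i]
  -- continuity of Ifun on [vlow, vup]
  have hIcont : ContinuousOn Ifun (Icc vlow vup) := by
    intro v0 hv0
    apply ContinuousAt.continuousWithinAt
    have hv0pos : 0 < v0 := lt_of_lt_of_le hvlow_pos hv0.1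
    have hnbhd : Ioo (vlow / 2) (vup + 1) ∈ nhds v0 :=
      isOpen_Ioo.mem_nhds ⟨by linarith [hv0.1], by linarith [hv0.2]⟩
    apply continuousAt_of_dominated (bound := fun x =>
      (Real.sqrt (2 * Real.pi * (vlow / 2)))⁻¹ *
        Real.exp (-(1 / (2 * (vup + 1))) * x ^ 2))
    · apply Filter.Eventually.of_forall
      intro v
      exact ((hp_meas.comp (measurable_const.sub measurable_id)).mul
        (measurable_gaussianPDFReal 0 (Real.toNNReal v))).aestronglyMeasurable
    · filter_upwards [hnbhd] with v hv
      apply ae_of_all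
      intro x
      obtain ⟨hv1, hv2⟩ := hv
      have hvpos : 0 < v := lt_of_lt_of_le (by linarith) hv1.le
      have hcoe : ((Real.toNNReal v : ℝ≥0) : ℝ) = v := Real.coe_toNNReal _ hvpos.le
      have hpdf : gaussianPDFReal 0 (Real.toNNReal v) x
          = (Real.sqrt (2 * Real.pi * v))⁻¹ * Real.exp (-x ^ 2 / (2 * v)) := by
        simp [gaussianPDFReal, hcoe]
      have hb1 : (Real.sqrt (2 * Real.pi * v))⁻¹
          ≤ (Real.sqrt (2 * Real.pi * (vlow / 2)))⁻¹ := by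
        apply inv_anti₀
        · apply Real.sqrt_pos.mpr; positivity
        · apply Real.sqrt_le_sqrt
          have := Real.pi_pos
          nlinarith
      have hb2 : Real.exp (-x ^ 2 / (2 * v)) ≤ Real.exp (-(1 / (2 * (vup + 1))) * x ^ 2) := by
        apply Real.exp_le_exp.mpr
        have h1 : x ^ 2 / (2 * (vup + 1)) ≤ x ^ 2 / (2 * v) :=
          div_le_div_of_nonneg_left (sq_nonneg x) (by positivity) (by linarith)
        have h2 : -(1 / (2 * (vup + 1))) * x ^ 2 = -(x ^ 2 / (2 * (vup + 1))) := by ring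
        have h3 : -x ^ 2 / (2 * v) = -(x ^ 2 / (2 * v)) := by ring
        rw [h2, h3]
        linarith
      calc ‖p (τ₁ - τ₀ - x) * gaussianPDFReal 0 (Real.toNNReal v) x‖
          = |p (τ₁ - τ₀ - x)| * |gaussianPDFReal 0 (Real.toNNReal v) x| := by
            rw [Real.norm_eq_abs, abs_mul]
        _ ≤ 1 * gaussianPDFReal 0 (Real.toNNReal v) x := by
            apply mul_le_mul (hpb _) (le_of_eq (abs_of_nonneg (gaussianPDFReal_nonneg _ _ _)))
              (abs_nonneg _) zero_le_one
        _ = gaussianPDFReal 0 (Real.toNNReal v) x := one_mul _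
        _ ≤ (Real.sqrt (2 * Real.pi * (vlow / 2)))⁻¹ *
              Real.exp (-(1 / (2 * (vup + 1))) * x ^ 2) := by
            rw [hpdf]
            apply mul_le_mul hb1 hb2 (Real.exp_nonneg _)
              (by positivity)
    · apply Integrable.const_mul
      exact integrable_exp_neg_mul_sq (by positivity : (0:ℝ) < 1 / (2 * (vup + 1)))
    · apply ae_of_all
      intro x
      apply ContinuousAt.mul continuousAt_const
      have heq : (fun v => gaussianPDFReal 0 (Real.toNNReal v) x)
          = fun v => (Real.sqrt (2 * Real.pi * (max v 0)))⁻¹ *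
              Real.exp (-(x - 0) ^ 2 / (2 * (max v 0))) := by
        funext v
        simp [gaussianPDFReal, Real.coe_toNNReal']
      rw [heq]
      have hmax : ContinuousAt (fun v : ℝ => max v 0) v0 :=
        (continuous_id.max continuous_const).continuousAt
      have hmax0 : max v0 0 = v0 := max_eq_left hv0pos.le
      apply ContinuousAt.mul
      · apply ContinuousAt.inv₀
        · exact (Real.continuous_sqrt.continuousAt).comp
            ((continuous_const.mul (continuous_id.max continuous_const)).continuousAt)
        · rw [hmax0]
          exact (Real.sqrt_pos.mpr (by positivity)).ne'
      · apply (Real.continuous_exp.continuousAt).comp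
        apply ContinuousAt.div continuousAt_const
          ((continuous_const.mul (continuous_id.max continuous_const)).continuousAt)
        simp only [id_eq]
        show (2:ℝ) * max v0 0 ≠ 0
        rw [hmax0]
        positivity
  -- positivity of Ifun
  have hIpos : ∀ v, 0 < v → 0 < Ifun v := by
    intro v hv
    set w : ℝ≥0 := Real.toNNReal v with hwdef
    have hw0 : w ≠ 0 := (Real.toNNReal_pos.mpr hv).ne'
    set φ : ℝ → ℝ := gaussianPDFReal 0 w with hφdef
    have hφpos : ∀ x, 0 < φ x := fun x => gaussianPDFReal_pos 0 w x hw0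
    have hφmeas : Measurable φ := measurable_gaussianPDFReal 0 w
    have hcoe : ((w : ℝ≥0) : ℝ) = v := Real.coe_toNNReal _ hv.le
    have hφeq : ∀ x, φ x = (Real.sqrt (2 * Real.pi * v))⁻¹ *
        Real.exp (-(x - 0) ^ 2 / (2 * v)) := by
      intro x
      simp [hφdef, gaussianPDFReal, hcoe]
    have hsqrt_pos : 0 < Real.sqrt (2 * Real.pi * v) :=
      Real.sqrt_pos.mpr (by have := Real.pi_pos; positivity)
    have hφbdd : ∀ x, φ x ≤ (Real.sqrt (2 * Real.pi * v))⁻¹ := by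
      intro x
      rw [hφeq x]
      calc (Real.sqrt (2 * Real.pi * v))⁻¹ * Real.exp (-(x - 0) ^ 2 / (2 * v))
          ≤ (Real.sqrt (2 * Real.pi * v))⁻¹ * 1 := by
            apply mul_le_mul_of_nonneg_left _ (by positivity)
            rw [Real.exp_le_one_iff]
            apply div_nonpos_of_nonpos_of_nonneg (by nlinarith [sq_nonneg (x - 0)]) (by linarith)
        _ = (Real.sqrt (2 * Real.pi * v))⁻¹ := mul_one _
    have hφmono : ∀ x y : ℝ, |x| < |y| → φ y < φ x := by
      intro x y hxy
      rw [hφeq x, hφeq y]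
      apply mul_lt_mul_of_pos_left _ (inv_pos.mpr hsqrt_pos)
      apply Real.exp_lt_exp.mpr
      have hsq : x ^ 2 < y ^ 2 := by
        have h1 : |x| ^ 2 < |y| ^ 2 := pow_lt_pow_left₀ hxy (abs_nonneg x) two_ne_zero
        rwa [sq_abs, sq_abs] at h1
      have h2v : (0:ℝ) < 2 * v := by linarith
      rw [div_lt_div_iff₀ h2v h2v]
      nlinarith
    -- rewrite Ifun v by the substitution x ↦ (τ₁ - τ₀) - x
    set g : ℝ → ℝ := fun x => p x * φ (τ₁ - τ₀ - x) with hgdef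
    have hgmeas : Measurable g :=
      hp_meas.mul (hφmeas.comp (measurable_const.sub measurable_id))
    have hgbdd : ∀ x, |g x| ≤ (Real.sqrt (2 * Real.pi * v))⁻¹ := by
      intro x
      simp only [hgdef]
      rw [abs_mul]
      calc |p x| * |φ (τ₁ - τ₀ - x)| ≤ 1 * (Real.sqrt (2 * Real.pi * v))⁻¹ := by
            apply mul_le_mul (hpb x) _ (abs_nonneg _) zero_le_one
            rw [abs_of_pos (hφpos _)]
            exact hφbdd _
        _ = (Real.sqrt (2 * Real.pi * v))⁻¹ := one_mul _
    have hIeq : Ifun v = ∫ x, g x := by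
      have hsub := integral_sub_left_eq_self
        (fun x => p (τ₁ - τ₀ - x) * φ x) volume (τ₁ - τ₀)
      rw [hIfun]
      simp only
      rw [← hsub]
      apply integral_congr_ae (ae_of_all _ fun x => ?_)
      have hx : τ₁ - τ₀ - (τ₁ - τ₀ - x) = x := by ring
      simp only [hgdef, hx]
    -- integrability helpers
    have hbint : ∀ (f : ℝ → ℝ), Measurable f →
        (∀ x, |f x| ≤ (Real.sqrt (2 * Real.pi * v))⁻¹ * 2) →
        ∀ a b : ℝ, IntervalIntegrable f volume a b := by
      intro f hf hfb a b
      rw [intervalIntegrable_iff]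
      apply Integrable.mono' (g := fun _ => (Real.sqrt (2 * Real.pi * v))⁻¹ * 2)
      · apply (integrableOn_const_iff).mpr
        apply Or.inr
        rw [Set.uIoc, Real.volume_Ioc]
        exact ENNReal.ofReal_lt_top
      · exact hf.aestronglyMeasurable
      · exact ae_of_all _ fun x => by rw [Real.norm_eq_abs]; exact hfb x
    have hgb2 : ∀ x, |g x| ≤ (Real.sqrt (2 * Real.pi * v))⁻¹ * 2 := fun x =>
      le_trans (hgbdd x) (by nlinarith [inv_pos.mpr hsqrt_pos])
    have hgint : ∀ a b : ℝ, IntervalIntegrable g volume a b := hbint g hgmeas hgb2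
    have hgnegmeas : Measurable (fun x => g (-x)) := hgmeas.comp measurable_neg
    have hgnegint : ∀ a b : ℝ, IntervalIntegrable (fun x => g (-x)) volume a b :=
      hbint _ hgnegmeas fun x => hgb2 (-x)
    -- decomposition of the full integral
    have hsupp : ∀ x ∉ Set.Ioc (-τnz) τnz, g x = 0 := by
      intro x hx
      have hpx : p x = 0 := by
        apply hp_out
        have hx' : ¬(-τnz < x ∧ x ≤ τnz) := by simpa [Set.mem_Ioc] using hx
        rcases not_and_or.mp hx' with h | h
        · exact Or.inl (le_of_not_gt h)
        · exact Or.inr (le_of_lt (lt_of_not_ge h))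
      simp only [hgdef, hpx, zero_mul]
    have hJ1 : ∫ x, g x = ∫ x in Set.Ioc (-τnz) τnz, g x :=
      (setIntegral_eq_integral_of_forall_compl_eq_zero hsupp).symm
    have hJ2 : ∫ x in Set.Ioc (-τnz) τnz, g x = ∫ x in (-τnz)..τnz, g x :=
      (intervalIntegral.integral_of_le (by linarith)).symm
    have hsplit : (∫ x in (-τnz)..(0:ℝ), g x) + ∫ x in (0:ℝ)..τnz, g x
        = ∫ x in (-τnz)..τnz, g x :=
      intervalIntegral.integral_add_adjacent_intervals (hgint _ _) (hgint _ _)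
    have hneg : ∫ x in (-τnz)..(0:ℝ), g (-x) = ∫ x in (0:ℝ)..τnz, g x := by
      have h := intervalIntegral.integral_comp_neg g (a := -τnz) (b := 0)
      simpa using h
    have hcomb : Ifun v = ∫ x in (-τnz)..(0:ℝ), (g x + g (-x)) := by
      rw [intervalIntegral.integral_add (hgint _ _) (hgnegint _ _), hneg, hsplit,
        ← hJ2, ← hJ1, hIeq]
    -- positivity of the integrand on (-τnz, 0)
    have hpos_in : ∀ x ∈ Set.Ioo (-τnz) (0:ℝ), 0 < g x + g (-x) := by
      intro x hx
      obtain ⟨hx1, hx2⟩ := hx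
      have hxneg : -x ∈ Set.Ioo 0 τnz := ⟨by linarith, by linarith⟩
      have hp1 : p x = q x := hp_neg x ⟨hx1, hx2⟩
      have hp2 : p (-x) = -q x := by rw [hp_pos (-x) hxneg, neg_neg]
      have habs : |τ₁ - τ₀ - x| < |τ₁ - τ₀ - -x| := by
        have h1 : |τ₁ - τ₀ - -x| = -(τ₁ - τ₀ + x) := by
          rw [sub_neg_eq_add]
          exact abs_of_neg (by linarith)
        rw [h1]
        apply abs_lt.mpr
        constructor <;> linarith
      have hφlt : φ (τ₁ - τ₀ - -x) < φ (τ₁ - τ₀ - x) := hφmono _ _ habs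
      have hqx := hq_pos x ⟨hx1, hx2⟩
      have heq : g x + g (-x) = q x * (φ (τ₁ - τ₀ - x) - φ (τ₁ - τ₀ - -x)) := by
        simp only [hgdef, hp1, hp2]
        ring
      rw [heq]
      exact mul_pos hqx (sub_pos.mpr hφlt)
    rw [hcomb, intervalIntegral.integral_of_le (by linarith), integral_Ioc_eq_integral_Ioo]
    apply (setIntegral_pos_iff_support_of_nonneg_ae ?_ ?_).mpr
    · have hsub2 : Set.Ioo (-τnz) (0:ℝ) ⊆
          Function.support (fun x => g x + g (-x)) := fun x hx => (hpos_in x hx).ne'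
      calc (0:ℝ≥0∞) < volume (Set.Ioo (-τnz) (0:ℝ)) := by
            rw [Real.volume_Ioo]
            apply ENNReal.ofReal_pos.mpr
            linarith
        _ ≤ volume (Function.support (fun x => g x + g (-x)) ∩ Set.Ioo (-τnz) 0) :=
            measure_mono (Set.subset_inter hsub2 (subset_refl _))
    · exact (ae_restrict_iff' measurableSet_Ioo).mpr
        (ae_of_all _ fun x hx => (hpos_in x hx).le)
    · apply Integrable.mono' (g := fun _ => (Real.sqrt (2 * Real.pi * v))⁻¹ * 2 * 2)
      · apply (integrableOn_const_iff).mpr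
        apply Or.inr
        rw [Real.volume_Ioo]
        exact ENNReal.ofReal_lt_top
      · exact (hgmeas.add hgnegmeas).aestronglyMeasurable
      · apply ae_of_all
        intro x
        rw [Real.norm_eq_abs]
        calc |g x + g (-x)| ≤ |g x| + |g (-x)| := abs_add_le _ _
          _ ≤ (Real.sqrt (2 * Real.pi * v))⁻¹ * 2 * 2 := by
              have := hgb2 x; have := hgb2 (-x)
              nlinarith [inv_pos.mpr hsqrt_pos]
  -- the minimum of Ifun
  obtain ⟨vstar, hvstar_mem, hvstar_min⟩ :=
    isCompact_Icc.exists_isMinOn (nonempty_Icc.mpr hvord) hIcont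
  set m : ℝ := Ifun vstar with hm
  have hm_pos : 0 < m := hIpos vstar (lt_of_lt_of_le hvlow_pos hvstar_mem.1)
  have hIlb : ∀ i, m ≤ Ifun (σbarsq / (α i) ^ 2) := fun i =>
    hvstar_min (hvmem i)
  -- bounds on the means
  set γ₁ : ℝ := Amax * (κ * m) / 2 with hγ₁
  have hγ₁_pos : 0 < γ₁ := by rw [hγ₁]; positivity
  have hμlb : ∀ i, γ₁ < μ i := by
    intro i
    rw [hfact i, hγ₁]
    have h1 : κ * m ≤ κ * Ifun (σbarsq / (α i) ^ 2) :=
      mul_le_mul_of_nonneg_left (hIlb i) hK_mean_pos.le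
    nlinarith
  have hμub : ∀ i, μ i < Amax + 1 := by
    intro i
    have h := norm_integral_le_of_norm_le_const (μ := P) (f := Y i) (C := Amax)
      (ae_of_all _ fun ω => by rw [Real.norm_eq_abs]; exact hYbdd i ω)
    rw [hμ i]
    have h2 : |∫ ω, Y i ω ∂P| ≤ Amax := by simpa [Real.norm_eq_abs] using h
    have := abs_le.mp h2
    have hle : ∫ ω, Y i ω ∂P ≤ Amax := this.2
    calc ∫ ω, Amax * K i ω * p (τ₁ - τ₀ - T i ω) ∂P ≤ Amax := hle
      _ < Amax + 1 := by linarith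
  -- variance bound
  have hvarb : ∀ i, σsqi i < Amax ^ 2 + 1 := by
    intro i
    rw [hσi i]
    have h := variance_le_sq_of_bounded (μ := P) (a := -Amax) (b := Amax)
      (ae_of_all _ fun ω => abs_le.mp (hYbdd i ω)) (hYmeas i).aemeasurable
    calc variance (Y i) P ≤ ((Amax - -Amax) / 2) ^ 2 := h
      _ = Amax ^ 2 := by ring
      _ < Amax ^ 2 + 1 := by linarith
  -- ηval positive
  have hη_pos : 0 < ηval := by
    have hlb : ∀ᶠ N : ℕ in atTop, γ₁ ≤ (1 / (N : ℝ)) * ∑ i ∈ Finset.range N, μ i := by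
      rw [eventually_atTop]
      refine ⟨1, fun N hN => ?_⟩
      have hNR : (0 : ℝ) < N := by exact_mod_cast hN
      have hsum : (N : ℝ) * γ₁ ≤ ∑ i ∈ Finset.range N, μ i := by
        calc (N : ℝ) * γ₁ = ∑ _i ∈ Finset.range N, γ₁ := by simp [mul_comm]
          _ ≤ ∑ i ∈ Finset.range N, μ i := Finset.sum_le_sum fun i _ => (hμlb i).le
      calc γ₁ = (1 / (N : ℝ)) * ((N : ℝ) * γ₁) := by field_simp
        _ ≤ (1 / (N : ℝ)) * ∑ i ∈ Finset.range N, μ i := by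
            apply mul_le_mul_of_nonneg_left hsum (by positivity)
    exact lt_of_lt_of_le hγ₁_pos (ge_of_tendsto hmean hlb)
  refine ⟨⟨γ₁, Amax + 1, hγ₁_pos, fun i => ⟨hμlb i, hμub i⟩⟩,
    ⟨Amax ^ 2 + 1, hvarb⟩, hη_pos, ?_⟩
  -- the strong law
  have hslln := my_slln_bdd P Y Amax hA hYmeas hYbdd hYpair
  filter_upwards [hslln] with ω hω
  have hμY : ∀ i, (∫ ω', Y i ω' ∂P) = μ i := fun i => (hμ i).symm
  have hω2 : Tendsto (fun N : ℕ => (1 / (N : ℝ)) *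
      ∑ i ∈ Finset.range N, (Y i ω - μ i)) atTop (nhds 0) := by
    simpa only [hμY] using hω
  have hfinal := hω2.add hmean
  rw [zero_add] at hfinal
  apply hfinal.congr
  intro N
  rw [Finset.sum_sub_distrib]
  ring
end

section
/- Let v > 0 and let T ~ N(0, v). Then for every c > 0, E[p(−c − T)] = ∫_ℝ p(−c − ψ)·φ_v(ψ) dψ > 0, where φ_v is the density of N(0, v); equivalently, for any τ₁ < τ₀, ∫_ℝ p(τ₁ − τ₀ − ψ)·φ_v(ψ) dψ > 0. -/
/-!
Substituting `s = -c - ψ` turns the smoothed pulse into `∫ p(s) φ_v(c + s) ds`. Folding the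
negative half-line onto the positive one and using that `p` is odd, this becomes
`∫_{s > 0} p(-s) (φ_v(s - c) - φ_v(s + c)) ds`. For `c, s > 0` we have `|s - c| < s + c`, so the
Gaussian factor is strictly positive, while `p(-s) ≥ 0` with strict inequality on `(0, τ_nz)`.
-/

open MeasureTheory ProbabilityTheory Set
open scoped NNReal

theorem integral_eq_integral_Ioi_comp_neg_add {E : Type*} [NormedAddCommGroup E]
    [NormedSpace ℝ E] {f : ℝ → E} (hf : Integrable f) :
    ∫ x, f x = ∫ x in Ioi 0, (f (-x) + f x) := by
  rw [integral_add hf.comp_neg.integrableOn hf.integrableOn, integral_comp_neg_Ioi, neg_zero,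
    intervalIntegral.integral_Iic_add_Ioi hf.integrableOn hf.integrableOn]

theorem gaussianPDFReal_lt_of_abs_sub_lt {μ : ℝ} {v : ℝ≥0} (hv : v ≠ 0) {x y : ℝ}
    (h : |x - μ| < |y - μ|) : gaussianPDFReal μ v y < gaussianPDFReal μ v x := by
  have hv' : (0 : ℝ) < v := by positivity
  simp only [gaussianPDFReal]
  have hsq : (x - μ) ^ 2 < (y - μ) ^ 2 := sq_lt_sq.mpr h
  gcongr

theorem le_of_iSup_eq_of_ne_zero {ι : Sort*} {f : ι → ℝ} {a : ℝ} (ha : a ≠ 0)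
    (h : ⨆ i, f i = a) (i : ι) : f i ≤ a := by
  have hbdd : BddAbove (range f) := by
    by_contra hnot
    exact ha (h ▸ Real.iSup_of_not_bddAbove hnot)
  exact h ▸ le_ciSup hbdd i

theorem Function.Odd.neg_of_pos {f : ℝ → ℝ} (hf : f.Odd) (hf_nonneg : ∀ x < 0, 0 ≤ f x) {x : ℝ}
    (hx : 0 < f x) : x < 0 := by
  by_contra! hx'
  rcases hx'.lt_or_eq with hx' | rfl
  · linarith [hf x, hf_nonneg (-x) (neg_neg_of_pos hx')]
  · simp [hf.map_zero] at hx

theorem Function.Odd.integral_comp_neg_sub_mul_gaussianPDFReal_pos {f : ℝ → ℝ} (hf : f.Odd)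
    (hf_meas : AEStronglyMeasurable f) {C : ℝ} (hf_bdd : ∀ x, |f x| ≤ C)
    (hf_nonneg : ∀ x < 0, 0 ≤ f x) (hf_pos : volume {x | 0 < f x} ≠ 0)
    {v : ℝ≥0} (hv : v ≠ 0) {c : ℝ} (hc : 0 < c) :
    0 < ∫ ψ, f (-c - ψ) * gaussianPDFReal 0 v ψ := by
  set φ := gaussianPDFReal 0 v
  set g := fun s ↦ f s * φ (-c - s)
  have hg_int : Integrable g := ((integrable_gaussianPDFReal 0 v).comp_sub_left _).bdd_mul hf_meas
    (ae_of_all _ fun s ↦ (Real.norm_eq_abs _).trans_le (hf_bdd s))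
  have h_subst : ∫ ψ, f (-c - ψ) * φ ψ = ∫ s, g s := by
    rw [← integral_sub_left_eq_self g volume (-c)]
    simp only [g, sub_sub_cancel]
  have h_fold : ∀ s, g (-s) + g s = f (-s) * (φ (s - c) - φ (-c - s)) := fun s ↦ by
    have hfs : f s = -f (-s) := by rw [hf, neg_neg]
    simp only [g, hfs, show -c - -s = s - c by ring]
    ring
  have h_kernel : ∀ s > 0, φ (-c - s) < φ (s - c) := fun s hs ↦
    gaussianPDFReal_lt_of_abs_sub_lt hv (by
      rw [sub_zero, sub_zero, abs_of_neg (by linarith : -c - s < 0), abs_lt]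
      constructor <;> linarith)
  have h_nonneg : ∀ s > 0, 0 ≤ g (-s) + g s := fun s hs ↦ h_fold s ▸
    mul_nonneg (hf_nonneg _ (neg_neg_of_pos hs)) (sub_nonneg.2 (h_kernel s hs).le)
  rw [h_subst, integral_eq_integral_Ioi_comp_neg_add hg_int,
    setIntegral_pos_iff_support_of_nonneg_ae
    ((ae_restrict_iff' measurableSet_Ioi).2 (ae_of_all _ h_nonneg))
    (hg_int.comp_neg.add hg_int).integrableOn]
  have h_supp : -{x | 0 < f x} ⊆ Function.support (fun s ↦ g (-s) + g s) ∩ Ioi 0 :=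
    fun s hs ↦ have hs0 : 0 < s := neg_lt_zero.1 (hf.neg_of_pos hf_nonneg hs)
      ⟨(h_fold s ▸ mul_pos hs (sub_pos.2 (h_kernel s hs0))).ne', hs0⟩
  rw [← Measure.measure_neg] at hf_pos
  exact (pos_iff_ne_zero.2 hf_pos).trans_le (measure_mono h_supp)

section Pulse

variable {τnz : ℝ} {q p : ℝ → ℝ}

theorem pulse_odd (hp_neg : ∀ t ∈ Ioo (-τnz) 0, p t = q t)
    (hp_pos : ∀ t ∈ Ioo 0 τnz, p t = -q (-t)) (hp_zero : p 0 = 0)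
    (hp_out : ∀ t, t ≤ -τnz ∨ τnz ≤ t → p t = 0) : p.Odd := by
  intro t
  rcases le_or_gt t (-τnz) with h₁ | h₁
  · rw [hp_out t (.inl h₁), hp_out (-t) (.inr (by linarith)), neg_zero]
  rcases le_or_gt τnz t with h₂ | h₂
  · rw [hp_out t (.inr h₂), hp_out (-t) (.inl (by linarith)), neg_zero]
  rcases lt_trichotomy t 0 with h₃ | rfl | h₃
  · rw [hp_pos (-t) ⟨by linarith, by linarith⟩, hp_neg t ⟨h₁, h₃⟩, neg_neg]
  · rw [neg_zero, hp_zero, neg_zero]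
  · rw [hp_pos t ⟨h₃, h₂⟩, hp_neg (-t) ⟨by linarith, by linarith⟩, neg_neg]

theorem pulse_nonneg_of_neg (hq_pos : ∀ t ∈ Ioo (-τnz) 0, 0 < q t)
    (hp_neg : ∀ t ∈ Ioo (-τnz) 0, p t = q t) (hp_out : ∀ t, t ≤ -τnz ∨ τnz ≤ t → p t = 0)
    (t : ℝ) (ht : t < 0) : 0 ≤ p t := by
  rcases le_or_gt t (-τnz) with h | h
  · rw [hp_out t (.inl h)]
  · rw [hp_neg t ⟨h, ht⟩]
    exact (hq_pos t ⟨h, ht⟩).le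

theorem abs_pulse_le_one (hq : ∀ t, |q t| ≤ 1) (hp_neg : ∀ t ∈ Ioo (-τnz) 0, p t = q t)
    (hp_pos : ∀ t ∈ Ioo 0 τnz, p t = -q (-t)) (hp_zero : p 0 = 0)
    (hp_out : ∀ t, t ≤ -τnz ∨ τnz ≤ t → p t = 0) (t : ℝ) : |p t| ≤ 1 := by
  rcases le_or_gt t (-τnz) with h₁ | h₁
  · simp [hp_out t (.inl h₁)]
  rcases le_or_gt τnz t with h₂ | h₂
  · simp [hp_out t (.inr h₂)]
  rcases lt_trichotomy t 0 with h₃ | rfl | h₃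
  · rw [hp_neg t ⟨h₁, h₃⟩]
    exact hq t
  · simp [hp_zero]
  · rw [hp_pos t ⟨h₃, h₂⟩, abs_neg]
    exact hq (-t)

end Pulse

theorem smoothed_pulse_positive_left_of_crossing_general
    (τnz : ℝ) (hτnz : 0 < τnz) (q p : ℝ → ℝ)
    (hq_pos : ∀ t ∈ Set.Ioo (-τnz) 0, 0 < q t)
    (hq_sup : (⨆ t, |q t|) = 1)
    (hp_neg : ∀ t ∈ Set.Ioo (-τnz) 0, p t = q t)
    (hp_pos : ∀ t ∈ Set.Ioo 0 τnz, p t = -q (-t))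
    (hp_zero : p 0 = 0)
    (hp_out : ∀ t, t ≤ -τnz ∨ τnz ≤ t → p t = 0)
    (hp_meas : Measurable p)
    (v : ℝ≥0) (hv : 0 < v) :
    (∀ c : ℝ, 0 < c → 0 < ∫ ψ, p (-c - ψ) * gaussianPDFReal 0 v ψ) ∧
    (∀ τ₀ τ₁ : ℝ, τ₁ < τ₀ → 0 < ∫ ψ, p (τ₁ - τ₀ - ψ) * gaussianPDFReal 0 v ψ) := by
  have hp_bdd := abs_pulse_le_one (le_of_iSup_eq_of_ne_zero one_ne_zero hq_sup) hp_neg hp_pos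
    hp_zero hp_out
  have hp_pos_set : volume {t | 0 < p t} ≠ 0 := by
    have h_sub : Ioo (-τnz) 0 ⊆ {t | 0 < p t} := fun t ht ↦
      show 0 < p t from hp_neg t ht ▸ hq_pos t ht
    have h_Ioo : 0 < volume (Ioo (-τnz) 0) := by simpa using hτnz
    exact (h_Ioo.trans_le (measure_mono h_sub)).ne'
  have h_left (c : ℝ) (hc : 0 < c) : 0 < ∫ ψ, p (-c - ψ) * gaussianPDFReal 0 v ψ :=
    (pulse_odd hp_neg hp_pos hp_zero hp_out).integral_comp_neg_sub_mul_gaussianPDFReal_pos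
      hp_meas.aestronglyMeasurable hp_bdd (pulse_nonneg_of_neg hq_pos hp_neg hp_out) hp_pos_set
      hv.ne' hc
  refine ⟨h_left, fun τ₀ τ₁ h ↦ ?_⟩
  simpa only [neg_sub] using h_left (τ₀ - τ₁) (sub_pos.2 h)

/-- For the odd pulse `p` and a centered Gaussian density `φ_v`
(`v > 0`), the smoothed pulse evaluated strictly to the left of the crossing is
strictly positive: for every `c > 0`, `∫ p(-c - ψ) φ_v(ψ) dψ > 0`; equivalently,
for any `τ₁ < τ₀`, `∫ p(τ₁ - τ₀ - ψ) φ_v(ψ) dψ > 0`. -/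
theorem smoothed_pulse_positive_left_of_crossing
    (τnz : ℝ) (hτnz : 0 < τnz) (q p : ℝ → ℝ)
    (hq_pos : ∀ t ∈ Set.Ioo (-τnz) 0, 0 < q t)
    (hq_zero : ∀ t, t ∉ Set.Ioo (-τnz) 0 → q t = 0)
    (hq_sup : (⨆ t, |q t|) = 1)
    (hq_uc : UniformContinuousOn q (Set.Ioo (-τnz) 0))
    (hp_neg : ∀ t ∈ Set.Ioo (-τnz) 0, p t = q t)
    (hp_pos : ∀ t ∈ Set.Ioo 0 τnz, p t = -q (-t))
    (hp_zero : p 0 = 0)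
    (hp_out : ∀ t, t ≤ -τnz ∨ τnz ≤ t → p t = 0)
    (hp_meas : Measurable p)
    (v : ℝ≥0) (hv : 0 < v) :
    (∀ c : ℝ, 0 < c → 0 < ∫ ψ, p (-c - ψ) * gaussianPDFReal 0 v ψ) ∧
    (∀ τ₀ τ₁ : ℝ, τ₁ < τ₀ → 0 < ∫ ψ, p (τ₁ - τ₀ - ψ) * gaussianPDFReal 0 v ψ) :=
  smoothed_pulse_positive_left_of_crossing_general τnz hτnz q p hq_pos hq_sup hp_neg hp_pos hp_zero
    hp_out hp_meas v hv
end

section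
/- Let m ≥ 2 be an integer and ε ∈ ℝ, let H̄ be the m×2 real matrix whose l-th row is (1, l−1+ε) for l = 1, …, m, and let C be the row vector (1, m). Then the 2×2 matrix H̄ᵀH̄ is invertible and C·(H̄ᵀH̄)⁻¹·Cᵀ = 2(2m+1)/(m(m−1)) + 12ε(ε−1−m)/((m−1)m(m+1)). -/
open Matrix Finset

lemma sum_id_real (m : ℕ) : ∑ l ∈ Finset.range m, (l : ℝ) = m * (m - 1) / 2 := by
  induction m with
  | zero => simp
  | succ n ih => rw [Finset.sum_range_succ, ih]; push_cast; ring

lemma sum_sq_real (m : ℕ) :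
    ∑ l ∈ Finset.range m, (l : ℝ) ^ 2 = m * (m - 1) * (2 * m - 1) / 6 := by
  induction m with
  | zero => simp
  | succ n ih => rw [Finset.sum_range_succ, ih]; push_cast; ring

/-- For the design matrix `H̄` of `m` unit-spaced observations
shifted by a known offset `ε` (`l`-th row `(1, l-1+ε)`) and `C = (1, m)`, the
matrix `H̄ᵀH̄` is invertible and
`C (H̄ᵀH̄)⁻¹ Cᵀ = 2(2m+1)/(m(m-1)) + 12ε(ε-1-m)/((m-1)m(m+1))`. -/
theorem design_matrix_prediction_variance_offset (m : ℕ) (hm : 2 ≤ m) (ε : ℝ)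
    (H : Matrix (Fin m) (Fin 2) ℝ)
    (hH : ∀ (l : Fin m) (j : Fin 2), H l j = if j = 0 then 1 else (l : ℝ) + ε)
    (C : Matrix (Fin 1) (Fin 2) ℝ)
    (hC : ∀ (i : Fin 1) (j : Fin 2), C i j = if j = 0 then 1 else (m : ℝ)) :
    IsUnit (Hᵀ * H) ∧
      (C * (Hᵀ * H)⁻¹ * Cᵀ) 0 0 =
        2 * (2 * (m : ℝ) + 1) / ((m : ℝ) * ((m : ℝ) - 1)) +
          12 * ε * (ε - 1 - (m : ℝ)) / (((m : ℝ) - 1) * (m : ℝ) * ((m : ℝ) + 1)) := by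
  have hm1 : (1 : ℝ) ≤ (m : ℝ) := by exact_mod_cast Nat.one_le_of_lt hm
  have hm0 : (0 : ℝ) < (m : ℝ) := by positivity
  have hmm1 : (0 : ℝ) < (m : ℝ) - 1 := by
    have : (2 : ℝ) ≤ (m : ℝ) := by exact_mod_cast hm
    linarith
  have hmp1 : (0 : ℝ) < (m : ℝ) + 1 := by linarith
  set A : ℝ := (m : ℝ)
  set B : ℝ := (m : ℝ) * ((m : ℝ) - 1) / 2 + (m : ℝ) * ε
  set D : ℝ := (m : ℝ) * ((m : ℝ) - 1) * (2 * (m : ℝ) - 1) / 6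
      + 2 * ε * ((m : ℝ) * ((m : ℝ) - 1) / 2) + (m : ℝ) * ε ^ 2
  have hS1 : ∑ l : Fin m, ((l : ℝ) + ε) = (m : ℝ) * ((m : ℝ) - 1) / 2 + (m : ℝ) * ε := by
    rw [Finset.sum_add_distrib]
    simp [Fin.sum_univ_eq_sum_range (fun l => (l : ℝ)), sum_id_real, mul_comm]
  have hS2 : ∑ l : Fin m, ((l : ℝ) + ε) ^ 2 = D := by
    have : ∀ l : Fin m, ((l : ℝ) + ε) ^ 2 = (l : ℝ) ^ 2 + 2 * ε * (l : ℝ) + ε ^ 2 := by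
      intro l; ring
    simp only [this, Finset.sum_add_distrib, ← Finset.mul_sum]
    simp [Fin.sum_univ_eq_sum_range (fun l => (l : ℝ)),
      Fin.sum_univ_eq_sum_range (fun l => (l : ℝ) ^ 2), sum_id_real, sum_sq_real, D, mul_comm]
  have hS2' : ∑ l : Fin m, ((l : ℝ) + ε) * ((l : ℝ) + ε) = D := by
    simpa [sq] using hS2
  have hHH : Hᵀ * H = !![A, B; B, D] := by
    ext i j
    fin_cases i <;> fin_cases j <;>
      simp [Matrix.mul_apply, hH, hS1, hS2', A, B]
  have hdet : (Hᵀ * H).det = A * D - B * B := by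
    rw [hHH, Matrix.det_fin_two_of]
  have hdetval : A * D - B * B = (m : ℝ) ^ 2 * (((m : ℝ) - 1) * ((m : ℝ) + 1)) / 12 := by
    simp only [A, B, D]; ring
  have hdetne : (Hᵀ * H).det ≠ 0 := by
    rw [hdet, hdetval]
    have h1 : (0:ℝ) < (m:ℝ)^2 - 1 := by nlinarith
    positivity
  have hunit : IsUnit (Hᵀ * H) := (Matrix.isUnit_iff_isUnit_det _).2 (isUnit_iff_ne_zero.2 hdetne)
  refine ⟨hunit, ?_⟩
  have hinv : (Hᵀ * H)⁻¹ = ((Hᵀ * H).det)⁻¹ • !![D, -B; -B, A] := by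
    rw [Matrix.inv_def, hHH, Matrix.adjugate_fin_two_of, ← hHH, Ring.inverse_eq_inv']
  rw [hinv]
  have : (C * (((Hᵀ * H).det)⁻¹ • !![D, -B; -B, A]) * Cᵀ) 0 0 =
      ((Hᵀ * H).det)⁻¹ * (D - B * (m:ℝ) + ((-B) * (m:ℝ) + A * (m:ℝ) * (m:ℝ))) := by
    simp [Matrix.mul_apply, Fin.sum_univ_two, hC, Matrix.smul_apply]
    ring
  rw [this, hdet, hdetval]
  simp only [A, B, D]
  field_simp
  ring
end

section
/- Let f_T : ℝ → [0, ∞) be an even probability density, let f_D : ℝ → [0, ∞) be a probability density supported in [0, ∞), and let g : ℝ → [0, 1] be measurable. For ξ ∈ ℝ define I(ξ) = ∫_ℝ ∫_{−∞}^{0} ∫_{0}^{∞} g(−y)·g(x)·p(ξ − ψ − y − x)·f_D(x)·f_D(−y)·f_T(ψ) dx dy dψ. Then I(ξ) = −I(−ξ) for all ξ ∈ ℝ, and in particular I(0) = 0. -/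
/-!
Write `w = g · f_D` and substitute `y ↦ -y`, so that both delays range over `(0, ∞)`:
`I(ξ) = ∫ f_T(ψ) A(ξ - ψ) dψ` with `A(u) = ∫∫_{x, y > 0} w(y) w(x) p(u + y - x) dx dy`.
Since `p` is odd, `A(-u)` is `-A(u)` with the roles of `x` and `y` exchanged; `p` is bounded
and `w` integrable, so Fubini makes `A` odd. Convolving the odd `A` with the even `f_T` gives
an odd function of `ξ`.
-/

open MeasureTheory Set

lemma le_of_iSup_eq {ι : Sort*} {f : ι → ℝ} {c : ℝ} (hc : c ≠ 0) (h : ⨆ i, f i = c) (i : ι) :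
    f i ≤ c := by
  have hbdd : BddAbove (range f) := by
    by_contra hb
    exact hc (h ▸ Real.iSup_of_not_bddAbove hb)
  exact h ▸ le_ciSup hbdd i

section Pulse

variable {τ : ℝ} {q p : ℝ → ℝ}
  (hp_neg : ∀ t ∈ Ioo (-τ) 0, p t = q t) (hp_pos : ∀ t ∈ Ioo 0 τ, p t = -q (-t))
  (hp_zero : p 0 = 0) (hp_out : ∀ t, t ≤ -τ ∨ τ ≤ t → p t = 0)
include hp_neg hp_pos hp_zero hp_out

lemma pulse_neg (t : ℝ) : p (-t) = -p t := by
  rcases lt_trichotomy t 0 with ht | rfl | ht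
  · by_cases h : -τ < t
    · rw [hp_neg t ⟨h, ht⟩, hp_pos (-t) ⟨neg_pos.2 ht, by linarith⟩, neg_neg]
    · rw [hp_out t (.inl (not_lt.1 h)), hp_out (-t) (.inr (by linarith)), neg_zero]
  · rw [neg_zero, hp_zero, neg_zero]
  · by_cases h : t < τ
    · rw [hp_pos t ⟨ht, h⟩, hp_neg (-t) ⟨by linarith, neg_neg_iff_pos.2 ht⟩, neg_neg]
    · rw [hp_out t (.inr (not_lt.1 h)), hp_out (-t) (.inl (by linarith)), neg_zero]

lemma abs_pulse_le_one_s13 (hq : ∀ t, |q t| ≤ 1) (t : ℝ) : |p t| ≤ 1 := by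
  rcases lt_trichotomy t 0 with ht | rfl | ht
  · by_cases h : -τ < t
    · rw [hp_neg t ⟨h, ht⟩]; exact hq t
    · rw [hp_out t (.inl (not_lt.1 h))]; simp
  · simp [hp_zero]
  · by_cases h : t < τ
    · rw [hp_pos t ⟨ht, h⟩, abs_neg]; exact hq (-t)
    · rw [hp_out t (.inr (not_lt.1 h))]; simp

end Pulse

noncomputable def kernelAutocorrelation (μ : Measure ℝ) (w k : ℝ → ℝ) (u : ℝ) : ℝ :=
  ∫ y, ∫ x, w y * w x * k (u + y - x) ∂μ ∂μ

section Autocorrelation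

variable {μ : Measure ℝ} {w k : ℝ → ℝ}

lemma integrable_kernelAutocorrelation_integrand [SFinite μ] (hw : Integrable w μ)
    (hk : Measurable k) {C : ℝ} (hC : ∀ t, |k t| ≤ C) (u : ℝ) :
    Integrable (fun z : ℝ × ℝ => w z.1 * w z.2 * k (u + z.1 - z.2)) (μ.prod μ) :=
  (hw.mul_prod hw).mul_bdd (hk.comp (by fun_prop)).aestronglyMeasurable
    (.of_forall fun z => hC _)

lemma kernelAutocorrelation_neg [SFinite μ] (hw : Integrable w μ) (hk : Measurable k)
    {C : ℝ} (hC : ∀ t, |k t| ≤ C) (hk_odd : ∀ t, k (-t) = -k t) (u : ℝ) :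
    kernelAutocorrelation μ w k (-u) = -kernelAutocorrelation μ w k u := by
  have hflip : ∀ x y, w y * w x * k (-u + y - x) = -(w x * w y * k (u + x - y)) := fun x y => by
    rw [show -u + y - x = -(u + x - y) by ring, hk_odd]; ring
  simp only [kernelAutocorrelation, hflip, integral_neg]
  exact congrArg Neg.neg (integral_integral_swap (f := fun y x => w y * w x * k (u + y - x))
    (integrable_kernelAutocorrelation_integrand hw hk hC u)).symm

end Autocorrelation

lemma integral_comp_neg_sub_mul_of_odd_of_even {G : Type*} [MeasurableSpace G] [AddCommGroup G]
    [MeasurableNeg G] {μ : Measure G} [μ.IsNegInvariant] {K f : G → ℝ}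
    (hK : ∀ u, K (-u) = -K u) (hf : ∀ x, f (-x) = f x) (ξ : G) :
    ∫ ψ, K (-ξ - ψ) * f ψ ∂μ = -∫ ψ, K (ξ - ψ) * f ψ ∂μ := by
  rw [← integral_neg_eq_self _ μ, ← integral_neg]
  congr 1 with ψ
  rw [show -ξ - -ψ = -(ξ - ψ) by abel, hK, hf, neg_mul]

lemma setIntegral_Iio_eq_setIntegral_Ioi_comp_neg {E : Type*} [NormedAddCommGroup E]
    [NormedSpace ℝ E] (c : ℝ) (F : ℝ → E) :
    ∫ y in Iio c, F y = ∫ y in Ioi (-c), F (-y) := by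
  rw [integral_comp_neg_Ioi, neg_neg, integral_Iic_eq_integral_Iio]

theorem delay_compensated_expectation_antisymmetric_general
    (τnz : ℝ) (q p : ℝ → ℝ)
    (hq_sup : (⨆ t, |q t|) = 1)
    (hp_neg : ∀ t ∈ Set.Ioo (-τnz) 0, p t = q t)
    (hp_pos : ∀ t ∈ Set.Ioo 0 τnz, p t = -q (-t))
    (hp_zero : p 0 = 0)
    (hp_out : ∀ t, t ≤ -τnz ∨ τnz ≤ t → p t = 0)
    (hp_meas : Measurable p)
    (fT fD g : ℝ → ℝ)
    (hfT_even : ∀ x, fT (-x) = fT x)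
    (hfD_int : ∫ x, fD x = 1)
    (hg_meas : Measurable g) (hg_range : ∀ x, g x ∈ Set.Icc (0 : ℝ) 1)
    (I : ℝ → ℝ)
    (hI : ∀ ξ, I ξ = ∫ ψ, ∫ y in Set.Iio (0 : ℝ), ∫ x in Set.Ioi (0 : ℝ),
      g (-y) * g x * p (ξ - ψ - y - x) * fD x * fD (-y) * fT ψ) :
    (∀ ξ : ℝ, I ξ = -I (-ξ)) ∧ I 0 = 0 := by
  set A := kernelAutocorrelation (volume.restrict (Ioi 0)) (g * fD) p
  have hfD : Integrable fD := .of_integral_ne_zero (by simp [hfD_int])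
  have hg_le : ∀ x, ‖g x‖ ≤ 1 := fun x => by
    rw [Real.norm_of_nonneg (hg_range x).1]; exact (hg_range x).2
  have hw : Integrable (g * fD) (volume.restrict (Ioi 0)) :=
    hfD.restrict.bdd_mul hg_meas.aestronglyMeasurable (.of_forall hg_le)
  have hA_odd : ∀ u, A (-u) = -A u :=
    kernelAutocorrelation_neg hw hp_meas
      (abs_pulse_le_one_s13 hp_neg hp_pos hp_zero hp_out (le_of_iSup_eq one_ne_zero hq_sup))
      (pulse_neg hp_neg hp_pos hp_zero hp_out)
  have hI_conv : ∀ ξ, I ξ = ∫ ψ, A (ξ - ψ) * fT ψ := fun ξ => by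
    rw [hI ξ]
    congr 1 with ψ
    simp only [A, kernelAutocorrelation, setIntegral_Iio_eq_setIntegral_Ioi_comp_neg, neg_zero,
      ← integral_mul_const, Pi.mul_apply, neg_neg, sub_neg_eq_add]
    congr 1 with y; congr 1 with x
    ring
  have hodd : ∀ ξ, I ξ = -I (-ξ) := fun ξ => by
    rw [hI_conv, hI_conv, integral_comp_neg_sub_mul_of_odd_of_even hA_odd hfT_even, neg_neg]
  exact ⟨hodd, self_eq_neg.1 (by simpa using hodd 0)⟩

/-- Antisymmetry of the delay-compensated expectation: for an
even density `f_T`, a density `f_D` supported in `[0, ∞)`, and `g : ℝ → [0,1]`,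
the function
`I(ξ) = ∫∫∫ g(-y) g(x) p(ξ - ψ - y - x) f_D(x) f_D(-y) f_T(ψ) dx dy dψ`
satisfies `I(ξ) = -I(-ξ)` for all `ξ`, and in particular `I(0) = 0`. -/
theorem delay_compensated_expectation_antisymmetric
    (τnz : ℝ) (hτnz : 0 < τnz) (q p : ℝ → ℝ)
    (hq_pos : ∀ t ∈ Set.Ioo (-τnz) 0, 0 < q t)
    (hq_zero : ∀ t, t ∉ Set.Ioo (-τnz) 0 → q t = 0)
    (hq_sup : (⨆ t, |q t|) = 1)
    (hq_uc : UniformContinuousOn q (Set.Ioo (-τnz) 0))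
    (hp_neg : ∀ t ∈ Set.Ioo (-τnz) 0, p t = q t)
    (hp_pos : ∀ t ∈ Set.Ioo 0 τnz, p t = -q (-t))
    (hp_zero : p 0 = 0)
    (hp_out : ∀ t, t ≤ -τnz ∨ τnz ≤ t → p t = 0)
    (hp_meas : Measurable p)
    (fT fD g : ℝ → ℝ)
    (hfT_meas : Measurable fT) (hfT_nonneg : ∀ x, 0 ≤ fT x)
    (hfT_int : ∫ x, fT x = 1) (hfT_even : ∀ x, fT (-x) = fT x)
    (hfD_meas : Measurable fD) (hfD_nonneg : ∀ x, 0 ≤ fD x)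
    (hfD_int : ∫ x, fD x = 1) (hfD_supp : ∀ x, x < 0 → fD x = 0)
    (hg_meas : Measurable g) (hg_range : ∀ x, g x ∈ Set.Icc (0 : ℝ) 1)
    (I : ℝ → ℝ)
    (hI : ∀ ξ, I ξ = ∫ ψ, ∫ y in Set.Iio (0 : ℝ), ∫ x in Set.Ioi (0 : ℝ),
      g (-y) * g x * p (ξ - ψ - y - x) * fD x * fD (-y) * fT ψ) :
    (∀ ξ : ℝ, I ξ = -I (-ξ)) ∧ I 0 = 0 :=
  delay_compensated_expectation_antisymmetric_general τnz q p hq_sup hp_neg hp_pos hp_zero hp_out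
    hp_meas fT fD g hfT_even hfD_int hg_meas hg_range I hI
end
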